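/- arXiv:2504.17637 — 4 statements merged into one kernel-verified Lean document; each statement's English description precedes it below -/
import Mathlib

section
/- Let n ≥ 3. A braid β ∈ B_n is strongly quasipositive (i.e. β ∈ SQP(n)) if and only if inf(β) ≥ 0. -/
/-- The braid relations on the free group on `n - 1` Artin generators. -/
def braidRels (n : ℕ) : Set (FreeGroup (Fin (n - 1))) :=
  { r | (∃ i j : Fin (n - 1), (i : ℕ) + 1 < (j : ℕ) ∧
          r = FreeGroup.of i * FreeGroup.of j * (FreeGroup.of i)⁻¹ * (FreeGroup.of j)⁻¹) ∨
        (∃ i j : Fin (n - 1), (i : ℕ) + 1 = (j : ℕ) ∧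
          r = FreeGroup.of i * FreeGroup.of j * FreeGroup.of i *
              (FreeGroup.of j * FreeGroup.of i * FreeGroup.of j)⁻¹) }

/-- The braid group `B_n`, presented with Artin generators `σ_1, …, σ_{n-1}`. -/
abbrev BraidGroup (n : ℕ) := PresentedGroup (braidRels n)

/-- The Artin generator `σ_k` (1-indexed; junk value `1` if `k` is out of range). -/
noncomputable def sigma (n : ℕ) (k : ℕ) : BraidGroup n :=
  if h : k - 1 < n - 1 then PresentedGroup.of (⟨k - 1, h⟩ : Fin (n - 1)) else 1

/-- The band generator `a_{i,j} = (σ_{j-1}⋯σ_{i+1}) σ_i (σ_{j-1}⋯σ_{i+1})⁻¹`. -/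
noncomputable def band (n i j : ℕ) : BraidGroup n :=
  (((List.range' (i + 1) (j - 1 - i)).reverse.map (sigma n)).prod) * sigma n i *
    (((List.range' (i + 1) (j - 1 - i)).reverse.map (sigma n)).prod)⁻¹

/-- The set of band generators `a_{i,j}`, `1 ≤ i < j ≤ n`. -/
def Bands (n : ℕ) : Set (BraidGroup n) :=
  { b | ∃ i j : ℕ, 1 ≤ i ∧ i < j ∧ j ≤ n ∧ b = band n i j }

/-- The monoid `SQP(n)` of strongly quasipositive braids. -/
def SQP (n : ℕ) : Submonoid (BraidGroup n) := Submonoid.closure (Bands n)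

/-- `δ = σ_{n-1} σ_{n-2} ⋯ σ_1`. -/
noncomputable def bdelta (n : ℕ) : BraidGroup n :=
  (((List.range' 1 (n - 1)).reverse.map (sigma n)).prod)

/-- The partial order `V ≤ W` iff `W = P V Q` with `P, Q ∈ SQP(n)`. -/
def bble (n : ℕ) (V W : BraidGroup n) : Prop :=
  ∃ P ∈ SQP n, ∃ Q ∈ SQP n, W = P * V * Q

/-- `inf(β) = max { r : δ^r ≤ β }`. -/
noncomputable def binf (n : ℕ) (β : BraidGroup n) : ℤ :=
  sSup { r : ℤ | bble n (bdelta n ^ r) β }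

/-- `sup(β) = min { s : β ≤ δ^s }`. -/
noncomputable def bsup (n : ℕ) (β : BraidGroup n) : ℤ :=
  sInf { s : ℤ | bble n β (bdelta n ^ s) }

/-- The canonical length `ℓ(β) = sup(β) - inf(β)`. -/
noncomputable def ell (n : ℕ) (β : BraidGroup n) : ℤ := bsup n β - binf n β

/-- A letter `(i, j, ε)` stands for `a_{i,j}` if `ε = true` and `a_{i,j}⁻¹` if `ε = false`. -/
noncomputable def evalLetter (n : ℕ) (l : ℕ × ℕ × Bool) : BraidGroup n :=
  if l.2.2 then band n l.1 l.2.1 else (band n l.1 l.2.1)⁻¹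

/-- A band-generator word: every letter indexes an honest band generator. -/
def IsWord (n : ℕ) (W : List (ℕ × ℕ × Bool)) : Prop :=
  ∀ l ∈ W, 1 ≤ l.1 ∧ l.1 < l.2.1 ∧ l.2.1 ≤ n

/-- `W` represents the braid `β`. -/
def Represents (n : ℕ) (W : List (ℕ × ℕ × Bool)) (β : BraidGroup n) : Prop :=
  IsWord n W ∧ (W.map (evalLetter n)).prod = β

/-- The number of negative bands in the word `W`. -/
def nbWord (W : List (ℕ × ℕ × Bool)) : ℕ := (W.filter fun l => !l.2.2).length

/-- The negative band number `nb(β)` of a braid. -/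
noncomputable def nb (n : ℕ) (β : BraidGroup n) : ℕ :=
  sInf { m : ℕ | ∃ W, Represents n W β ∧ nbWord W = m }

/-- The negative band number `nb([β])` of a conjugacy class. -/
noncomputable def nbConj (n : ℕ) (β : BraidGroup n) : ℕ :=
  sInf { m : ℕ | ∃ β' : BraidGroup n, IsConj β β' ∧ nb n β' = m }

/-- The minimal band-generator word length `‖β‖`. -/
noncomputable def wordLen (n : ℕ) (β : BraidGroup n) : ℕ :=
  sInf { m : ℕ | ∃ W, Represents n W β ∧ W.length = m }

/-- The minimal length of a positive band-generator word representing `A`. -/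
noncomputable def posLen (n : ℕ) (A : BraidGroup n) : ℕ :=
  sInf { m : ℕ | ∃ W, Represents n W A ∧ (∀ l ∈ W, l.2.2 = true) ∧ W.length = m }

/-- Canonical factors: `e ≤ A ≤ δ`. -/
def CnFct (n : ℕ) : Set (BraidGroup n) :=
  { A | bble n 1 A ∧ bble n A (bdelta n) }

/-- `A ≺ B` iff `B = A Q` for a canonical factor `Q`. -/
def prec (n : ℕ) (A B : BraidGroup n) : Prop :=
  ∃ Q ∈ CnFct n, B = A * Q

/-- `A B` is maximally left-weighted. -/
def MLW (n : ℕ) (A B : BraidGroup n) : Prop :=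
  ¬ ∃ A' ∈ CnFct n, ∃ B' ∈ CnFct n, A * B = A' * B' ∧ prec n A A' ∧ A ≠ A'

/-- `β = δ^r A_1 ⋯ A_k` is a left-canonical factorization. -/
def IsLCF (n : ℕ) (β : BraidGroup n) (r : ℤ) (A : List (BraidGroup n)) : Prop :=
  β = bdelta n ^ r * A.prod ∧
  (∀ X ∈ A, X ∈ CnFct n ∧ X ≠ 1 ∧ X ≠ bdelta n) ∧
  A.Chain' (MLW n)

/-- The super summit set `SSS([β])`: conjugates of `β` of minimal canonical length. -/
def SSS (n : ℕ) (β : BraidGroup n) : Set (BraidGroup n) :=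
  { β' | IsConj β β' ∧ ∀ γ : BraidGroup n, IsConj β γ → ell n β' ≤ ell n γ }

/-- The summit set `SS([β])`: conjugates of `β` of maximal infimum. -/
def SS (n : ℕ) (β : BraidGroup n) : Set (BraidGroup n) :=
  { β' | IsConj β β' ∧ ∀ γ : BraidGroup n, IsConj β γ → binf n γ ≤ binf n β' }

/-- The writhe homomorphism, sending each `σ_i` to `1 ∈ ℤ`. -/
noncomputable def writheHom (n : ℕ) : BraidGroup n →* Multiplicative ℤ :=
  PresentedGroup.toGroup (f := fun _ => Multiplicative.ofAdd (1 : ℤ)) (by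
    rintro r (⟨i, j, hij, rfl⟩ | ⟨i, j, hij, rfl⟩) <;>
      (simp [map_mul, map_inv, FreeGroup.lift_apply_of] <;> group))

/-- The writhe (exponent sum) of a braid. -/
noncomputable def writhe (n : ℕ) (β : BraidGroup n) : ℤ :=
  Multiplicative.toAdd (writheHom n β)

section BraidAux

variable {n : ℕ}

private lemma Commute.lcomm' {G : Type*} [Group G] {a b : G} (h : Commute a b) (t : G) :
    a * (b * t) = b * (a * t) := by rw [← mul_assoc, h.eq, mul_assoc]

/-- descending product of sigmas -/
noncomputable def dsc (n a len : ℕ) : BraidGroup n :=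
  ((List.range' a len).reverse.map (sigma n)).prod

lemma dsc_zero (a : ℕ) : dsc n a 0 = 1 := rfl

lemma dsc_succ_left (a len : ℕ) : dsc n a (len + 1) = dsc n (a + 1) len * sigma n a := by
  simp [dsc, List.range'_succ]

lemma dsc_succ_right (a len : ℕ) : dsc n a (len + 1) = sigma n (a + len) * dsc n a len := by
  have : List.range' a (len + 1) = List.range' a len ++ [a + len] := by
    have h : List.range' a (len + 1) = _ := List.range'_concat
    simpa using h
  simp [dsc, this]

lemma dsc_split (a l1 l2 : ℕ) : dsc n a (l1 + l2) = dsc n (a + l1) l2 * dsc n a l1 := by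
  have : List.range' a (l1 + l2) = List.range' a l1 ++ List.range' (a + l1) l2 := by
    have : List.range' a l1 1 ++ List.range' (a + 1 * l1) l2 1 = List.range' a (l1 + l2) 1 :=
      List.range'_append
    simp only [one_mul, Nat.add_comm l2 l1] at this
    exact this.symm
  unfold dsc
  rw [this, List.reverse_append, List.map_append, List.prod_append]

lemma bdelta_eq_dsc : bdelta n = dsc n 1 (n - 1) := rfl

lemma band_eq_dsc (i j : ℕ) :
    band n i j = dsc n (i + 1) (j - 1 - i) * sigma n i * (dsc n (i + 1) (j - 1 - i))⁻¹ := rfl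

lemma rel_one {r : FreeGroup (Fin (n - 1))} (h : r ∈ braidRels n) :
    PresentedGroup.mk (braidRels n) r = 1 :=
  (QuotientGroup.eq_one_iff r).2 (Subgroup.subset_normalClosure h)

lemma sigma_valid {k : ℕ} (h : k - 1 < n - 1) :
    sigma n k = PresentedGroup.of (⟨k - 1, h⟩ : Fin (n - 1)) := dif_pos h

lemma sigma_junk {k : ℕ} (h : ¬ k - 1 < n - 1) : sigma n k = 1 := dif_neg h

lemma sigma_comm {i j : ℕ} (h1 : 1 ≤ i) (h2 : i + 2 ≤ j) :
    Commute (sigma n i) (sigma n j) := by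
  by_cases hi : i - 1 < n - 1
  · by_cases hj : j - 1 < n - 1
    · rw [sigma_valid hi, sigma_valid hj]
      have hr : (FreeGroup.of (⟨i - 1, hi⟩ : Fin (n - 1)) * FreeGroup.of (⟨j - 1, hj⟩ : Fin (n-1)) *
          (FreeGroup.of (⟨i - 1, hi⟩ : Fin (n - 1)))⁻¹ *
          (FreeGroup.of (⟨j - 1, hj⟩ : Fin (n-1)))⁻¹) ∈ braidRels n := by
        left; exact ⟨_, _, by simp; omega, rfl⟩
      have := rel_one hr
      simp only [map_mul, map_inv] at this
      have h' : PresentedGroup.mk (braidRels n) (FreeGroup.of (⟨i-1, hi⟩ : Fin (n-1))) =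
          PresentedGroup.of (⟨i-1, hi⟩ : Fin (n-1)) := rfl
      have h'' : PresentedGroup.mk (braidRels n) (FreeGroup.of (⟨j-1, hj⟩ : Fin (n-1))) =
          PresentedGroup.of (⟨j-1, hj⟩ : Fin (n-1)) := rfl
      rw [h', h''] at this
      exact commutatorElement_eq_one_iff_commute.mp this
    · rw [sigma_junk hj]; exact Commute.one_right _
  · rw [sigma_junk hi]; exact Commute.one_left _

lemma braid_rel {i : ℕ} (h1 : 1 ≤ i) (h2 : i + 1 ≤ n - 1) :
    sigma n i * sigma n (i + 1) * sigma n i = sigma n (i + 1) * sigma n i * sigma n (i + 1) := by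
  have hi : i - 1 < n - 1 := by omega
  have hj : (i + 1) - 1 < n - 1 := by omega
  rw [sigma_valid hi, sigma_valid hj]
  have hr : (FreeGroup.of (⟨i - 1, hi⟩ : Fin (n - 1)) * FreeGroup.of (⟨(i+1) - 1, hj⟩ : Fin (n-1)) *
      FreeGroup.of (⟨i - 1, hi⟩ : Fin (n - 1)) *
      (FreeGroup.of (⟨(i+1) - 1, hj⟩ : Fin (n-1)) * FreeGroup.of (⟨i - 1, hi⟩ : Fin (n - 1)) *
        FreeGroup.of (⟨(i+1) - 1, hj⟩ : Fin (n-1)))⁻¹) ∈ braidRels n := by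
    right; exact ⟨_, _, by simp; omega, rfl⟩
  have := rel_one hr
  simp only [map_mul, map_inv] at this
  have h' : ∀ x : Fin (n-1), PresentedGroup.mk (braidRels n) (FreeGroup.of x) =
      PresentedGroup.of x := fun _ => rfl
  rw [h', h'] at this
  rw [mul_inv_eq_one] at this
  exact this

end BraidAux
section BraidAux2

variable {n : ℕ}

lemma commute_dsc {x : BraidGroup n} {a len : ℕ}
    (h : ∀ m, a ≤ m → m < a + len → Commute x (sigma n m)) : Commute x (dsc n a len) := by
  induction len with
  | zero => rw [dsc_zero]; exact Commute.one_right _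
  | succ l ih =>
      rw [dsc_succ_right]
      exact (h (a + l) (by omega) (by omega)).mul_right (ih fun m hm hm' => h m hm (by omega))

lemma bdelta_split {k : ℕ} (h1 : 1 ≤ k) (h2 : k + 1 ≤ n - 1) :
    bdelta n = dsc n (k + 2) (n - 1 - (k + 1)) *
      (sigma n (k + 1) * (sigma n k * dsc n 1 (k - 1))) := by
  rw [bdelta_eq_dsc]
  have e1 : dsc n 1 (n - 1) = dsc n 1 ((k + 1) + (n - 1 - (k + 1))) := by congr 1; omega
  rw [e1, dsc_split]
  have e2 : dsc n 1 (k + 1) = sigma n (k + 1) * (sigma n k * dsc n 1 (k - 1)) := by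
    obtain ⟨m, rfl⟩ : ∃ m, k = m + 1 := ⟨k - 1, by omega⟩
    have s1 : dsc n 1 (m + 1 + 1) = sigma n (1 + (m + 1)) * dsc n 1 (m + 1) :=
      dsc_succ_right 1 (m + 1)
    have s2 : dsc n 1 (m + 1) = sigma n (1 + m) * dsc n 1 m := dsc_succ_right 1 m
    have c1 : sigma n (1 + (m + 1)) = sigma n (m + 1 + 1) := congrArg _ (by omega)
    have c2 : sigma n (1 + m) = sigma n (m + 1) := congrArg _ (by omega)
    have c3 : dsc n 1 (m + 1 - 1) = dsc n 1 m := congrArg _ (by omega)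
    rw [s1, s2, c1, c2, c3]
  have e5 : dsc n (1 + (k + 1)) (n - 1 - (k + 1)) = dsc n (k + 2) (n - 1 - (k + 1)) := by
    have : 1 + (k + 1) = k + 2 := by omega
    exact congrFun (congrArg _ this) _
  rw [e2, e5]

lemma sigma_mul_bdelta {k : ℕ} (h1 : 1 ≤ k) (h2 : k + 1 ≤ n - 1) :
    sigma n k * bdelta n = bdelta n * sigma n (k + 1) := by
  set A := dsc n (k + 2) (n - 1 - (k + 1)) with hA
  set B := dsc n 1 (k - 1) with hB
  have hcA : Commute (sigma n k) A :=
    commute_dsc fun m hm _ => sigma_comm h1 (by omega)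
  have hcB : Commute (sigma n (k + 1)) B :=
    ((commute_dsc (x := sigma n (k+1)) (a := 1) (len := k - 1))
      fun m hm hm' => (sigma_comm hm (by omega)).symm)
  rw [bdelta_split h1 h2, ← hA, ← hB]
  calc sigma n k * (A * (sigma n (k + 1) * (sigma n k * B)))
      = A * (sigma n k * (sigma n (k + 1) * (sigma n k * B))) := hcA.lcomm' _
    _ = A * (sigma n k * sigma n (k + 1) * sigma n k * B) := by
        simp only [mul_assoc]
    _ = A * (sigma n (k + 1) * sigma n k * sigma n (k + 1) * B) := by
        rw [braid_rel h1 h2]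
    _ = A * (sigma n (k + 1) * (sigma n k * (sigma n (k + 1) * B))) := by
        simp only [mul_assoc]
    _ = A * (sigma n (k + 1) * (sigma n k * (B * sigma n (k + 1)))) := by
        rw [hcB.eq]
    _ = A * (sigma n (k + 1) * (sigma n k * B)) * sigma n (k + 1) := by
        simp only [mul_assoc]

/-- conjugation by delta -/
noncomputable def tauc (n : ℕ) (x : BraidGroup n) : BraidGroup n :=
  (bdelta n)⁻¹ * x * bdelta n

lemma tauc_mul (x y : BraidGroup n) : tauc n (x * y) = tauc n x * tauc n y := by
  unfold tauc; group

lemma tauc_one : tauc n 1 = 1 := by unfold tauc; group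

lemma tauc_inv (x : BraidGroup n) : tauc n x⁻¹ = (tauc n x)⁻¹ := by unfold tauc; group

lemma tauc_sigma {k : ℕ} (h1 : 1 ≤ k) (h2 : k + 1 ≤ n - 1) :
    tauc n (sigma n k) = sigma n (k + 1) := by
  unfold tauc
  rw [mul_assoc, sigma_mul_bdelta h1 h2, ← mul_assoc, inv_mul_cancel, one_mul]

lemma tauc_dsc {a len : ℕ} (h1 : 1 ≤ a) (h2 : a + len ≤ n - 1) :
    tauc n (dsc n a len) = dsc n (a + 1) len := by
  induction len with
  | zero => rw [dsc_zero, dsc_zero, tauc_one]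
  | succ l ih =>
      rw [dsc_succ_right, tauc_mul, ih (by omega), tauc_sigma (by omega) (by omega),
        dsc_succ_right]
      have c1 : sigma n (a + l + 1) = sigma n (a + 1 + l) := congrArg _ (by omega)
      rw [c1]

end BraidAux2
section BraidAux3

variable {n : ℕ}

lemma tauc_band_lt {i j : ℕ} (h1 : 1 ≤ i) (h2 : i < j) (h3 : j ≤ n - 1) :
    tauc n (band n i j) = band n (i + 1) (j + 1) := by
  rw [band_eq_dsc, band_eq_dsc, tauc_mul, tauc_mul, tauc_inv]
  have hd : tauc n (dsc n (i + 1) (j - 1 - i)) = dsc n (i + 2) (j - 1 - i) := by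
    rw [tauc_dsc (by omega) (by omega)]
  have hs : tauc n (sigma n i) = sigma n (i + 1) := tauc_sigma h1 (by omega)
  rw [hd, hs]
  have c1 : dsc n (i + 2) (j - 1 - i) = dsc n (i + 1 + 1) (j + 1 - 1 - (i + 1)) := by
    have : i + 2 = i + 1 + 1 := rfl
    have h4 : j - 1 - i = j + 1 - 1 - (i + 1) := by omega
    rw [h4]
  rw [c1]

lemma conj_dsc_band {m : ℕ} (h : m + 1 ≤ n - 1) :
    (dsc n 1 m)⁻¹ * sigma n (m + 1) * dsc n 1 m = band n 1 (m + 2) := by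
  induction m with
  | zero =>
      rw [dsc_zero, band_eq_dsc]
      have : (2 : ℕ) - 1 - 1 = 0 := rfl
      rw [this, dsc_zero]
      group
  | succ l ih =>
      have hb : sigma n (l + 1) * sigma n (l + 2) * sigma n (l + 1) =
          sigma n (l + 2) * sigma n (l + 1) * sigma n (l + 2) := by
        have := braid_rel (n := n) (i := l + 1) (by omega) (by omega)
        have c : sigma n (l + 1 + 1) = sigma n (l + 2) := rfl
        rw [c] at this
        exact this
      -- key conjugation identity: σ_{l+1}⁻¹ σ_{l+2} σ_{l+1} = σ_{l+2} σ_{l+1} σ_{l+2}⁻¹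
      have key : (sigma n (l + 1))⁻¹ * sigma n (l + 2) * sigma n (l + 1) =
          sigma n (l + 2) * sigma n (l + 1) * (sigma n (l + 2))⁻¹ := by
        have h2 : sigma n (l + 2) * sigma n (l + 1) =
            (sigma n (l + 1))⁻¹ * (sigma n (l + 1) * sigma n (l + 2) * sigma n (l + 1)) := by
          group
        rw [h2, hb]; group
      have hcomm : Commute (sigma n (l + 2)) (dsc n 1 l) :=
        commute_dsc fun m hm hm' => (sigma_comm hm (by omega)).symm
      have hsplit : dsc n 1 (l + 1) = sigma n (l + 1) * dsc n 1 l := by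
        have := dsc_succ_right (n := n) 1 l
        have c : sigma n (1 + l) = sigma n (l + 1) := congrArg _ (by omega)
        rw [c] at this
        exact this
      rw [hsplit]
      have ihl := ih (by omega)
      calc (sigma n (l + 1) * dsc n 1 l)⁻¹ * sigma n (l + 1 + 1) * (sigma n (l + 1) * dsc n 1 l)
          = (dsc n 1 l)⁻¹ * ((sigma n (l + 1))⁻¹ * sigma n (l + 2) * sigma n (l + 1)) *
              dsc n 1 l := by
            have c : sigma n (l + 1 + 1) = sigma n (l + 2) := rfl
            rw [c, mul_inv_rev]; group
        _ = (dsc n 1 l)⁻¹ * (sigma n (l + 2) * sigma n (l + 1) * (sigma n (l + 2))⁻¹) *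
              dsc n 1 l := by rw [key]
        _ = sigma n (l + 2) * ((dsc n 1 l)⁻¹ * sigma n (l + 1) * dsc n 1 l) *
              (sigma n (l + 2))⁻¹ := by
            have c1 := hcomm.inv_right.eq  -- σ_{l+2} * (dsc)⁻¹ = (dsc)⁻¹ * σ_{l+2}
            have c2 := hcomm.eq
            calc (dsc n 1 l)⁻¹ * (sigma n (l + 2) * sigma n (l + 1) * (sigma n (l + 2))⁻¹) *
                  dsc n 1 l
                = ((dsc n 1 l)⁻¹ * sigma n (l + 2)) * sigma n (l + 1) *
                    ((sigma n (l + 2))⁻¹ * dsc n 1 l) := by group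
              _ = (sigma n (l + 2) * (dsc n 1 l)⁻¹) * sigma n (l + 1) *
                    (dsc n 1 l * (sigma n (l + 2))⁻¹) := by
                  rw [← c1, (hcomm.inv_left.eq).symm]
              _ = sigma n (l + 2) * ((dsc n 1 l)⁻¹ * sigma n (l + 1) * dsc n 1 l) *
                    (sigma n (l + 2))⁻¹ := by group
        _ = sigma n (l + 2) * band n 1 (l + 2) * (sigma n (l + 2))⁻¹ := by rw [ihl]
        _ = band n 1 (l + 1 + 2) := by
            rw [band_eq_dsc, band_eq_dsc]
            have e1 : (l + 2 : ℕ) - 1 - 1 = l := by omega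
            have e2 : (l + 1 + 2 : ℕ) - 1 - 1 = l + 1 := by omega
            rw [e1, e2]
            have e3 : dsc n 2 (l + 1) = sigma n (l + 2) * dsc n 2 l := by
              have := dsc_succ_right (n := n) 2 l
              have c : sigma n (2 + l) = sigma n (l + 2) := congrArg _ (by omega)
              rw [c] at this
              exact this
            rw [e3]
            group

lemma tauc_band_n {i : ℕ} (h1 : 1 ≤ i) (h2 : i < n) :
    tauc n (band n i n) = band n 1 (i + 1) := by
  have hsplit : bdelta n = dsc n (i + 1) (n - 1 - i) * dsc n 1 i := by
    rw [bdelta_eq_dsc]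
    have e1 : dsc n 1 (n - 1) = dsc n 1 (i + (n - 1 - i)) := congrArg _ (by omega)
    rw [e1, dsc_split]
    have e2 : dsc n (1 + i) (n - 1 - i) = dsc n (i + 1) (n - 1 - i) := by
      have : 1 + i = i + 1 := by omega
      rw [this]
    rw [e2]
  have hband : band n i n = dsc n (i + 1) (n - 1 - i) * sigma n i *
      (dsc n (i + 1) (n - 1 - i))⁻¹ := by
    rw [band_eq_dsc]
  have hD : dsc n 1 i = sigma n i * dsc n 1 (i - 1) := by
    obtain ⟨m, rfl⟩ : ∃ m, i = m + 1 := ⟨i - 1, by omega⟩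
    have := dsc_succ_right (n := n) 1 m
    have c : sigma n (1 + m) = sigma n (m + 1) := congrArg _ (by omega)
    rw [c] at this
    have c2 : dsc n 1 (m + 1 - 1) = dsc n 1 m := congrArg _ (by omega)
    rw [c2]
    exact this
  have step1 : tauc n (band n i n) = (dsc n 1 (i - 1))⁻¹ * sigma n i * dsc n 1 (i - 1) := by
    unfold tauc
    rw [hband, hsplit, hD]
    group
  rw [step1]
  obtain ⟨m, rfl⟩ : ∃ m, i = m + 1 := ⟨i - 1, by omega⟩
  have c2 : dsc n 1 (m + 1 - 1) = dsc n 1 m := congrArg _ (by omega)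
  rw [c2]
  exact conj_dsc_band (by omega)

end BraidAux3
section BraidAux4

variable {n : ℕ}

lemma sigma_mem_SQP {k : ℕ} (h1 : 1 ≤ k) (h2 : k ≤ n - 1) : sigma n k ∈ SQP n := by
  have hb : band n k (k + 1) = sigma n k := by
    rw [band_eq_dsc]
    have : (k + 1 : ℕ) - 1 - k = 0 := by omega
    rw [this, dsc_zero]
    group
  rw [← hb]
  exact Submonoid.subset_closure ⟨k, k + 1, h1, by omega, by omega, rfl⟩

lemma band_mem_SQP {i j : ℕ} (h1 : 1 ≤ i) (h2 : i < j) (h3 : j ≤ n) : band n i j ∈ SQP n :=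
  Submonoid.subset_closure ⟨i, j, h1, h2, h3, rfl⟩

lemma dsc_mem_SQP {a len : ℕ} (h1 : 1 ≤ a) (h2 : a + len ≤ n) : dsc n a len ∈ SQP n := by
  induction len with
  | zero => rw [dsc_zero]; exact one_mem _
  | succ l ih =>
      rw [dsc_succ_right]
      exact mul_mem (sigma_mem_SQP (by omega) (by omega)) (ih (by omega))

lemma bdelta_mem_SQP (hn : 2 ≤ n) : bdelta n ∈ SQP n := by
  rw [bdelta_eq_dsc]; exact dsc_mem_SQP le_rfl (by omega)

lemma tauc_mem_SQP (hn : 2 ≤ n) {x : BraidGroup n} (hx : x ∈ SQP n) : tauc n x ∈ SQP n := by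
  induction hx using Submonoid.closure_induction with
  | mem b hb =>
      obtain ⟨i, j, h1, h2, h3, rfl⟩ := hb
      rcases Nat.lt_or_ge j n with hj | hj
      · rw [tauc_band_lt h1 h2 (by omega)]
        exact band_mem_SQP (by omega) (by omega) (by omega)
      · have : j = n := by omega
        subst this
        rw [tauc_band_n h1 h2]
        exact band_mem_SQP le_rfl (by omega) (by omega)
  | one => rw [tauc_one]; exact one_mem _
  | mul x y _ _ hx hy => rw [tauc_mul]; exact mul_mem hx hy

lemma conj_delta_pow_mem_SQP (hn : 2 ≤ n) (N : ℕ) {x : BraidGroup n} (hx : x ∈ SQP n) :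
    (bdelta n)⁻¹ ^ N * x * bdelta n ^ N ∈ SQP n := by
  induction N generalizing x with
  | zero => simpa using hx
  | succ M ih =>
      have : (bdelta n)⁻¹ ^ (M + 1) * x * bdelta n ^ (M + 1) =
          (bdelta n)⁻¹ ^ M * tauc n x * bdelta n ^ M := by
        rw [pow_succ, pow_succ']
        unfold tauc
        group
      rw [this]
      exact ih (tauc_mem_SQP hn hx)

lemma mul_delta_pow_SQP (hn : 2 ≤ n) {x y : BraidGroup n} (N : ℕ)
    (hx : x * bdelta n ^ N ∈ SQP n) (hy : y ∈ SQP n) :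
    x * y * bdelta n ^ N ∈ SQP n := by
  have : x * y * bdelta n ^ N =
      (x * bdelta n ^ N) * ((bdelta n)⁻¹ ^ N * y * bdelta n ^ N) := by
    group
  rw [this]
  exact mul_mem hx (conj_delta_pow_mem_SQP hn N hy)

lemma sigma_inv_mul_bdelta_mem_SQP (hn : 3 ≤ n) {i : ℕ} (h1 : 1 ≤ i) (h2 : i ≤ n - 1) :
    (sigma n i)⁻¹ * bdelta n ∈ SQP n := by
  rcases Nat.lt_or_ge i (n - 1) with hi | hi
  · -- i ≤ n - 2 : use the split
    have hsplit := bdelta_split (n := n) h1 (by omega)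
    have hcA : Commute (sigma n i) (dsc n (i + 2) (n - 1 - (i + 1))) :=
      commute_dsc fun m hm _ => sigma_comm h1 (by omega)
    have key : (sigma n i)⁻¹ * sigma n (i + 1) * sigma n i =
        sigma n (i + 1) * sigma n i * (sigma n (i + 1))⁻¹ := by
      have hb := braid_rel (n := n) h1 (by omega)
      have h2' : sigma n (i + 1) * sigma n i =
          (sigma n i)⁻¹ * (sigma n i * sigma n (i + 1) * sigma n i) := by group
      rw [h2', hb]; group
    have hband : band n i (i + 2) = sigma n (i + 1) * sigma n i * (sigma n (i + 1))⁻¹ := by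
      rw [band_eq_dsc]
      have e1 : (i + 2 : ℕ) - 1 - i = 1 := by omega
      rw [e1]
      have e2 : dsc n (i + 1) 1 = sigma n (i + 1) := by
        have := dsc_succ_right (n := n) (i + 1) 0
        rw [dsc_zero] at this
        simpa using this
      rw [e2]
    have : (sigma n i)⁻¹ * bdelta n =
        dsc n (i + 2) (n - 1 - (i + 1)) * band n i (i + 2) * dsc n 1 (i - 1) := by
      rw [hsplit, hband, ← key]
      have := (hcA.inv_left).eq
      calc (sigma n i)⁻¹ *
            (dsc n (i + 2) (n - 1 - (i + 1)) * (sigma n (i + 1) * (sigma n i * dsc n 1 (i - 1))))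
          = ((sigma n i)⁻¹ * dsc n (i + 2) (n - 1 - (i + 1))) *
              (sigma n (i + 1) * (sigma n i * dsc n 1 (i - 1))) := by group
        _ = (dsc n (i + 2) (n - 1 - (i + 1)) * (sigma n i)⁻¹) *
              (sigma n (i + 1) * (sigma n i * dsc n 1 (i - 1))) := by rw [this]
        _ = dsc n (i + 2) (n - 1 - (i + 1)) *
              ((sigma n i)⁻¹ * sigma n (i + 1) * sigma n i) * dsc n 1 (i - 1) := by group
    rw [this]
    exact mul_mem (mul_mem (dsc_mem_SQP (by omega) (by omega))
      (band_mem_SQP h1 (by omega) (by omega))) (dsc_mem_SQP le_rfl (by omega))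
  · -- i = n - 1
    have hi' : i = n - 1 := by omega
    subst hi'
    have hsplit : bdelta n = sigma n (n - 1) * dsc n 1 (n - 2) := by
      rw [bdelta_eq_dsc]
      obtain ⟨m, hm⟩ : ∃ m, n - 1 = m + 1 := ⟨n - 2, by omega⟩
      have e : dsc n 1 (n - 1) = dsc n 1 (m + 1) := congrArg _ hm
      rw [e]
      have := dsc_succ_right (n := n) 1 m
      have c1 : sigma n (1 + m) = sigma n (n - 1) := congrArg _ (by omega)
      have c2 : dsc n 1 m = dsc n 1 (n - 2) := congrArg _ (by omega)
      rw [c1, c2] at this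
      exact this
    rw [hsplit]
    have : (sigma n (n - 1))⁻¹ * (sigma n (n - 1) * dsc n 1 (n - 2)) = dsc n 1 (n - 2) := by
      group
    rw [this]
    exact dsc_mem_SQP le_rfl (by omega)

lemma exists_mul_delta_pow_mem_SQP (hn : 3 ≤ n) (β : BraidGroup n) :
    ∃ N : ℕ, β * bdelta n ^ N ∈ SQP n := by
  obtain ⟨w, rfl⟩ := PresentedGroup.mk_surjective (braidRels n) β
  induction w using FreeGroup.induction_on with
  | C1 => exact ⟨0, by simpa using one_mem (SQP n)⟩
  | of x =>
      refine ⟨0, ?_⟩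
      have : PresentedGroup.mk (braidRels n) (FreeGroup.of x) = sigma n ((x : ℕ) + 1) := by
        show PresentedGroup.mk (braidRels n) (FreeGroup.of x) = _
        rw [sigma_valid (k := (x : ℕ) + 1) (by simpa using x.isLt)]
        rfl
      rw [pow_zero, mul_one, this]
      exact sigma_mem_SQP (by omega) (by have := x.isLt; omega)
  | inv_of x _ =>
      refine ⟨1, ?_⟩
      have h1 : PresentedGroup.mk (braidRels n) (FreeGroup.of x)⁻¹ =
          (sigma n ((x : ℕ) + 1))⁻¹ := by
        show PresentedGroup.mk (braidRels n) (FreeGroup.of x)⁻¹ = _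
        rw [map_inv]
        congr 1
        rw [sigma_valid (k := (x : ℕ) + 1) (by simpa using x.isLt)]
        rfl
      rw [pow_one, h1]
      exact sigma_inv_mul_bdelta_mem_SQP hn (by omega) (by have := x.isLt; omega)
  | mul x y hx hy =>
      obtain ⟨N, hN⟩ := hx
      obtain ⟨M, hM⟩ := hy
      refine ⟨M + N, ?_⟩
      have : PresentedGroup.mk (braidRels n) (x * y) * bdelta n ^ (M + N) =
          (PresentedGroup.mk (braidRels n) x * (PresentedGroup.mk (braidRels n) y *
            bdelta n ^ M)) * bdelta n ^ N := by
        rw [map_mul, pow_add]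
        group
      rw [this]
      exact mul_delta_pow_SQP (by omega) N (by
        have e : PresentedGroup.mk (braidRels n) x * bdelta n ^ N = _ := rfl
        exact hN) hM

end BraidAux4
section BraidAux5

variable {n : ℕ}

lemma writhe_mul (x y : BraidGroup n) : writhe n (x * y) = writhe n x + writhe n y := by
  unfold writhe; rw [map_mul]; rfl

lemma writhe_inv (x : BraidGroup n) : writhe n x⁻¹ = -writhe n x := by
  unfold writhe; rw [map_inv]; rfl

lemma writhe_one : writhe n (1 : BraidGroup n) = 0 := by
  unfold writhe; rw [map_one]; rfl

lemma writheHom_of (x : Fin (n - 1)) :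
    writheHom n (PresentedGroup.of x) = Multiplicative.ofAdd 1 :=
  PresentedGroup.toGroup.of _

lemma writhe_sigma_valid {k : ℕ} (h : k - 1 < n - 1) : writhe n (sigma n k) = 1 := by
  rw [sigma_valid h]
  unfold writhe
  rw [writheHom_of]
  rfl

lemma writhe_sigma_nonneg (k : ℕ) : 0 ≤ writhe n (sigma n k) := by
  by_cases h : k - 1 < n - 1
  · rw [writhe_sigma_valid h]; norm_num
  · rw [sigma_junk h, writhe_one]

lemma writhe_dsc_nonneg (a len : ℕ) : 0 ≤ writhe n (dsc n a len) := by
  induction len with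
  | zero => rw [dsc_zero, writhe_one]
  | succ l ih =>
      rw [dsc_succ_right, writhe_mul]
      have := writhe_sigma_nonneg (n := n) (a + l)
      omega

lemma writhe_band (i j : ℕ) : writhe n (band n i j) = writhe n (sigma n i) := by
  rw [band_eq_dsc, writhe_mul, writhe_mul, writhe_inv]
  ring

lemma writhe_SQP_nonneg {x : BraidGroup n} (hx : x ∈ SQP n) : 0 ≤ writhe n x := by
  induction hx using Submonoid.closure_induction with
  | mem b hb =>
      obtain ⟨i, j, h1, h2, h3, rfl⟩ := hb
      rw [writhe_band]
      exact writhe_sigma_nonneg i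
  | one => rw [writhe_one]
  | mul x y _ _ hx hy => rw [writhe_mul]; omega

lemma writhe_bdelta_pos (hn : 3 ≤ n) : 1 ≤ writhe n (bdelta n) := by
  rw [bdelta_eq_dsc]
  obtain ⟨m, hm⟩ : ∃ m, n - 1 = m + 1 := ⟨n - 2, by omega⟩
  have e : dsc n 1 (n - 1) = dsc n 1 (m + 1) := congrArg _ hm
  rw [e, dsc_succ_right, writhe_mul]
  have h1 : writhe n (sigma n (1 + m)) = 1 := writhe_sigma_valid (by omega)
  have h2 := writhe_dsc_nonneg (n := n) 1 m
  omega

lemma writhe_zpow (x : BraidGroup n) (r : ℤ) : writhe n (x ^ r) = r * writhe n x := by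
  unfold writhe
  rw [map_zpow]
  rw [toAdd_zpow, smul_eq_mul]

lemma binf_bound (hn : 3 ≤ n) (β : BraidGroup n) {r : ℤ}
    (hr : bble n (bdelta n ^ r) β) : r ≤ max 0 (writhe n β) := by
  obtain ⟨P, hP, Q, hQ, hβ⟩ := hr
  have hw : writhe n β = writhe n P + r * writhe n (bdelta n) + writhe n Q := by
    rw [hβ, writhe_mul, writhe_mul, writhe_zpow]
  have h1 := writhe_SQP_nonneg hP
  have h2 := writhe_SQP_nonneg hQ
  have h3 := writhe_bdelta_pos hn
  rcases le_or_gt r 0 with h | h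
  · exact le_trans h (le_max_left _ _)
  · have : r ≤ r * writhe n (bdelta n) := le_mul_of_one_le_right (by omega) h3
    have : r ≤ writhe n β := by nlinarith
    exact le_trans this (le_max_right _ _)

end BraidAux5
/-- For `n ≥ 3`, a braid `β ∈ B_n` is strongly quasipositive iff `inf(β) ≥ 0`. -/
theorem statement_0 (n : ℕ) (hn : 3 ≤ n) (β : BraidGroup n) :
    β ∈ SQP n ↔ 0 ≤ binf n β := by
  have hbdd : BddAbove {r : ℤ | bble n (bdelta n ^ r) β} :=
    ⟨max 0 (writhe n β), fun r hr => binf_bound hn β hr⟩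
  constructor
  · intro hβ
    have h0 : (0 : ℤ) ∈ {r : ℤ | bble n (bdelta n ^ r) β} := by
      refine ⟨1, one_mem _, β, hβ, ?_⟩
      rw [zpow_zero]
      group
    exact le_csSup hbdd h0
  · intro h
    obtain ⟨N, hN⟩ := exists_mul_delta_pow_mem_SQP hn β
    have hne : bble n (bdelta n ^ (-(N : ℤ))) β := by
      refine ⟨β * bdelta n ^ N, hN, 1, one_mem _, ?_⟩
      rw [mul_one, zpow_neg, zpow_natCast]
      group
    obtain ⟨r0, hr0, hub⟩ := Int.exists_greatest_of_bdd
      (P := fun r => bble n (bdelta n ^ r) β)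
      ⟨max 0 (writhe n β), fun z hz => binf_bound hn β hz⟩ ⟨_, hne⟩
    have heq : binf n β = r0 := by
      unfold binf
      exact le_antisymm (csSup_le ⟨_, hne⟩ hub) (le_csSup hbdd hr0)
    rw [heq] at h
    obtain ⟨P, hP, Q, hQ, hβ⟩ := hr0
    rw [hβ]
    have hpow : bdelta n ^ r0 = bdelta n ^ (r0.toNat) := by
      rw [← zpow_natCast]
      congr 1
      omega
    rw [hpow]
    exact mul_mem (mul_mem hP (pow_mem (bdelta_mem_SQP (by omega)) _)) hQ
end

section
/- Let n ≥ 3 and β ∈ B_n. Then nb(β) ≥ 1 if and only if inf(β) ≤ −1. -/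
namespace BraidAux

variable {n : ℕ}

/-- Descending product `σ_{a+m-1} ⋯ σ_a`. -/
noncomputable def Dp (n a m : ℕ) : BraidGroup n :=
  ((List.range' a m).reverse.map (sigma n)).prod

@[simp] lemma Dp_zero (a : ℕ) : Dp n a 0 = 1 := rfl

lemma Dp_succ_left (a m : ℕ) : Dp n a (m + 1) = sigma n (a + m) * Dp n a m := by
  simp [Dp, List.range'_concat]

lemma Dp_succ_right (a m : ℕ) : Dp n a (m + 1) = Dp n (a + 1) m * sigma n a := by
  simp [Dp, List.range'_succ]

lemma Dp_one (a : ℕ) : Dp n a 1 = sigma n a := by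
  simpa using Dp_succ_left (n := n) a 0

lemma Dp_split (a p q : ℕ) : Dp n a (p + q) = Dp n (a + p) q * Dp n a p := by
  have h := List.range'_append (s := a) (m := p) (n := q) (step := 1)
  simp only [one_mul] at h
  rw [Dp, Dp, Dp, ← h, List.reverse_append, List.map_append, List.prod_append]

lemma band_def (i j : ℕ) :
    band n i j = Dp n (i + 1) (j - 1 - i) * sigma n i * (Dp n (i + 1) (j - 1 - i))⁻¹ := rfl

lemma bdelta_def : bdelta n = Dp n 1 (n - 1) := rfl

lemma band_eq_sigma (k : ℕ) : band n k (k + 1) = sigma n k := by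
  have : k + 1 - 1 - k = 0 := by omega
  rw [band_def, this]
  simp

/-- Images of relators are 1. -/
lemma rel_eq_one {r : FreeGroup (Fin (n - 1))} (hr : r ∈ braidRels n) :
    (QuotientGroup.mk r : BraidGroup n) = 1 :=
  (QuotientGroup.eq_one_iff r).mpr (Subgroup.subset_normalClosure hr)

lemma sigma_eq_of {k : ℕ} (h1 : 1 ≤ k) (h2 : k ≤ n - 1) :
    sigma n k = PresentedGroup.of (⟨k - 1, by omega⟩ : Fin (n - 1)) := by
  rw [sigma, dif_pos]

lemma of_eq_mk (x : Fin (n - 1)) :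
    (PresentedGroup.of x : BraidGroup n) = QuotientGroup.mk (FreeGroup.of x) := rfl

lemma braid_comm {i j : ℕ} (hi : 1 ≤ i) (hij : i + 2 ≤ j) (hj : j ≤ n - 1) :
    sigma n i * sigma n j = sigma n j * sigma n i := by
  set x : Fin (n - 1) := ⟨i - 1, by omega⟩
  set y : Fin (n - 1) := ⟨j - 1, by omega⟩
  have h1 := rel_eq_one (n := n)
    (r := FreeGroup.of x * FreeGroup.of y * (FreeGroup.of x)⁻¹ * (FreeGroup.of y)⁻¹)
    (Or.inl ⟨x, y, by simp [x, y]; omega, rfl⟩)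
  simp only [QuotientGroup.mk_mul, QuotientGroup.mk_inv] at h1
  rw [sigma_eq_of hi (by omega), sigma_eq_of (by omega : 1 ≤ j) hj]
  have h2 : (PresentedGroup.of x : BraidGroup n) * PresentedGroup.of y * (PresentedGroup.of x)⁻¹ *
      (PresentedGroup.of y)⁻¹ = 1 := h1
  exact mul_inv_eq_one.mp (by rw [mul_inv_rev, ← mul_assoc]; exact h2)

lemma braid_rel {i : ℕ} (hi : 1 ≤ i) (hj : i + 1 ≤ n - 1) :
    sigma n i * sigma n (i + 1) * sigma n i = sigma n (i + 1) * sigma n i * sigma n (i + 1) := by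
  set x : Fin (n - 1) := ⟨i - 1, by omega⟩
  set y : Fin (n - 1) := ⟨i + 1 - 1, by omega⟩
  have h1 := rel_eq_one (n := n)
    (r := FreeGroup.of x * FreeGroup.of y * FreeGroup.of x *
      (FreeGroup.of y * FreeGroup.of x * FreeGroup.of y)⁻¹)
    (Or.inr ⟨x, y, by simp [x, y]; omega, rfl⟩)
  simp only [QuotientGroup.mk_mul, QuotientGroup.mk_inv] at h1
  rw [sigma_eq_of hi (by omega), sigma_eq_of (by omega : 1 ≤ i + 1) hj, of_eq_mk, of_eq_mk]
  exact mul_inv_eq_one.mp h1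

end BraidAux

namespace BraidAux

variable {n : ℕ}

lemma Dp_congr {a m m' : ℕ} (h : m = m') : Dp n a m = Dp n a m' := by rw [h]

lemma commute_of_braid_comm {i j : ℕ} (hi : 1 ≤ i) (hij : i + 2 ≤ j) (hj : j ≤ n - 1) :
    Commute (sigma n i) (sigma n j) := braid_comm hi hij hj

lemma sigma_comm_Dp {k a m : ℕ}
    (h : ∀ x, a ≤ x → x < a + m → Commute (sigma n k) (sigma n x)) :
    Commute (sigma n k) (Dp n a m) := by
  induction m with
  | zero => simpa using Commute.one_right _
  | succ m ih =>
    rw [Dp_succ_left]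
    exact ((h (a + m) (by omega) (by omega)).mul_right
      (ih fun x hx hx' => h x hx (by omega)))

lemma delta_mul_sigma {k : ℕ} (h2 : 2 ≤ k) (hk : k ≤ n - 1) :
    bdelta n * sigma n k = sigma n (k - 1) * bdelta n := by
  have e1 : bdelta n = Dp n k (n - k) * Dp n 1 (k - 1) := by
    have h := Dp_split (n := n) 1 (k - 1) (n - k)
    rw [show 1 + (k - 1) = k by omega] at h
    exact (bdelta_def.trans (Dp_congr (by omega))).trans h
  have e2 : Dp n 1 (k - 1) = sigma n (k - 1) * Dp n 1 (k - 2) := by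
    have h := Dp_succ_left (n := n) 1 (k - 2)
    rw [show 1 + (k - 2) = k - 1 by omega] at h
    exact (Dp_congr (by omega)).trans h
  have e3 : Dp n k (n - k) = Dp n (k + 1) (n - k - 1) * sigma n k := by
    have h := Dp_succ_right (n := n) k (n - k - 1)
    exact (Dp_congr (by omega)).trans h
  have c1 : Commute (sigma n k) (Dp n 1 (k - 2)) :=
    sigma_comm_Dp fun x hx hx' =>
      (commute_of_braid_comm (i := x) (j := k) (by omega) (by omega) hk).symm
  have c2 : Commute (sigma n (k - 1)) (Dp n (k + 1) (n - k - 1)) :=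
    sigma_comm_Dp fun x hx hx' =>
      commute_of_braid_comm (i := k - 1) (j := x) (by omega) (by omega) (by omega)
  have brel : sigma n k * sigma n (k - 1) * sigma n k
      = sigma n (k - 1) * sigma n k * sigma n (k - 1) := by
    have h := braid_rel (n := n) (i := k - 1) (by omega) (by omega)
    rw [show k - 1 + 1 = k by omega] at h
    exact h.symm
  set A := Dp n (k + 1) (n - k - 1)
  set B := Dp n 1 (k - 2)
  set x := sigma n k
  set y := sigma n (k - 1)
  rw [e1, e2, e3]
  calc A * x * (y * B) * x = A * (x * y) * (B * x) := by group
    _ = A * (x * y) * (x * B) := by rw [← c1.eq]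
    _ = A * (x * y * x) * B := by group
    _ = A * (y * x * y) * B := by rw [brel]
    _ = (y * A) * (x * (y * B)) := by rw [c2.eq]; group
    _ = y * (A * x * (y * B)) := by group

lemma delta_conj_sigma {k : ℕ} (h2 : 2 ≤ k) (hk : k ≤ n - 1) :
    bdelta n * sigma n k * (bdelta n)⁻¹ = sigma n (k - 1) := by
  rw [delta_mul_sigma h2 hk]; group

lemma delta_eq_Dp_mul_sigma_one (hn : 2 ≤ n) : bdelta n = Dp n 2 (n - 2) * sigma n 1 := by
  have h := Dp_split (n := n) 1 1 (n - 2)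
  rw [show (1 : ℕ) + 1 = 2 from rfl, Dp_one] at h
  exact (bdelta_def.trans (Dp_congr (by omega))).trans h

lemma band_one_n_def (hn : 2 ≤ n) :
    band n 1 n = Dp n 2 (n - 2) * sigma n 1 * (Dp n 2 (n - 2))⁻¹ := by
  rw [band_def, show n - 1 - 1 = n - 2 by omega]

lemma delta_conj_sigma_one (hn : 2 ≤ n) :
    bdelta n * sigma n 1 * (bdelta n)⁻¹ = band n 1 n := by
  rw [band_one_n_def hn]
  conv_lhs => rw [delta_eq_Dp_mul_sigma_one hn]
  group

lemma band_succ {i j : ℕ} (hij : i < j) :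
    band n i (j + 1) = sigma n j * band n i j * (sigma n j)⁻¹ := by
  have h := Dp_succ_left (n := n) (i + 1) (j - 1 - i)
  rw [show i + 1 + (j - 1 - i) = j by omega] at h
  rw [band_def, band_def, show j + 1 - 1 - i = (j - 1 - i) + 1 by omega, h]
  group

lemma sigma_conj_band {k : ℕ} (h1 : 1 ≤ k) (h2 : k + 2 ≤ n) :
    sigma n k * band n k n * (sigma n k)⁻¹ = band n (k + 1) n := by
  have e : Dp n (k + 1) (n - 1 - k) = Dp n (k + 2) (n - 2 - k) * sigma n (k + 1) := by
    have h := Dp_succ_right (n := n) (k + 1) (n - 2 - k)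
    exact (Dp_congr (by omega)).trans h
  have c : Commute (sigma n k) (Dp n (k + 2) (n - 2 - k)) :=
    sigma_comm_Dp fun x hx hx' =>
      commute_of_braid_comm (i := k) (j := x) h1 (by omega) (by omega)
  have brel := braid_rel (n := n) (i := k) h1 (by omega)
  rw [band_def, band_def, show n - 1 - (k + 1) = n - 2 - k by omega, e]
  set A := Dp n (k + 2) (n - 2 - k)
  set x := sigma n k
  set y := sigma n (k + 1)
  calc x * (A * y * x * (A * y)⁻¹) * x⁻¹
      = (x * A) * (y * x * (y⁻¹ * (A⁻¹ * x⁻¹))) := by group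
    _ = (A * x) * (y * x * (y⁻¹ * (A⁻¹ * x⁻¹))) := by rw [c.eq]
    _ = (A * x) * (y * x * (y⁻¹ * (x⁻¹ * A⁻¹))) := by rw [c.inv_inv.eq]
    _ = A * ((x * y * x) * (y⁻¹ * (x⁻¹ * A⁻¹))) := by group
    _ = A * ((y * x * y) * (y⁻¹ * (x⁻¹ * A⁻¹))) := by rw [brel]
    _ = A * y * A⁻¹ := by group

lemma delta_conj_band_one (hn : 2 ≤ n) {j : ℕ} (h2 : 2 ≤ j) (hjn : j ≤ n) :
    bdelta n * band n 1 j * (bdelta n)⁻¹ = band n (j - 1) n := by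
  revert hjn
  induction j, h2 using Nat.le_induction with
  | base =>
    intro _
    have h : band n 1 2 = sigma n 1 := band_eq_sigma 1
    rw [h, delta_conj_sigma_one hn]
  | succ j hj ih =>
    intro hjn
    have hj' : j ≤ n := by omega
    rw [band_succ (show 1 < j by omega)]
    calc bdelta n * (sigma n j * band n 1 j * (sigma n j)⁻¹) * (bdelta n)⁻¹
        = (bdelta n * sigma n j * (bdelta n)⁻¹) * (bdelta n * band n 1 j * (bdelta n)⁻¹) *
          (bdelta n * sigma n j * (bdelta n)⁻¹)⁻¹ := by group
      _ = sigma n (j - 1) * band n (j - 1) n * (sigma n (j - 1))⁻¹ := by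
          rw [delta_conj_sigma (by omega) (by omega), ih hj']
      _ = band n (j - 1 + 1) n := sigma_conj_band (by omega) (by omega)
      _ = band n (j + 1 - 1) n := by rw [show j - 1 + 1 = j + 1 - 1 by omega]

lemma delta_conj_Dp {a m : ℕ} (h2 : 2 ≤ a) (h : a + m ≤ n) :
    bdelta n * Dp n a m * (bdelta n)⁻¹ = Dp n (a - 1) m := by
  induction m with
  | zero => simp
  | succ m ih =>
    rw [Dp_succ_left, Dp_succ_left]
    calc bdelta n * (sigma n (a + m) * Dp n a m) * (bdelta n)⁻¹
        = (bdelta n * sigma n (a + m) * (bdelta n)⁻¹) *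
          (bdelta n * Dp n a m * (bdelta n)⁻¹) := by group
      _ = sigma n (a + m - 1) * Dp n (a - 1) m := by
          rw [delta_conj_sigma (by omega) (by omega), ih (by omega)]
      _ = sigma n (a - 1 + m) * Dp n (a - 1) m := by rw [show a + m - 1 = a - 1 + m by omega]

lemma delta_conj_band' {i j : ℕ} (h2 : 2 ≤ i) (hij : i < j) (hj : j ≤ n) :
    bdelta n * band n i j * (bdelta n)⁻¹ = band n (i - 1) (j - 1) := by
  have hD : bdelta n * Dp n (i + 1) (j - 1 - i) * (bdelta n)⁻¹ = Dp n i (j - 1 - i) := by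
    have h := delta_conj_Dp (n := n) (a := i + 1) (m := j - 1 - i) (by omega) (by omega)
    rwa [show i + 1 - 1 = i by omega] at h
  have hs : bdelta n * sigma n i * (bdelta n)⁻¹ = sigma n (i - 1) :=
    delta_conj_sigma h2 (by omega)
  have hb : band n (i - 1) (j - 1)
      = Dp n i (j - 1 - i) * sigma n (i - 1) * (Dp n i (j - 1 - i))⁻¹ := by
    rw [band_def, show i - 1 + 1 = i by omega, show j - 1 - 1 - (i - 1) = j - 1 - i by omega]
  rw [band_def, hb]
  calc bdelta n * (Dp n (i + 1) (j - 1 - i) * sigma n i * (Dp n (i + 1) (j - 1 - i))⁻¹) * (bdelta n)⁻¹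
      = (bdelta n * Dp n (i + 1) (j - 1 - i) * (bdelta n)⁻¹) * (bdelta n * sigma n i * (bdelta n)⁻¹) *
        (bdelta n * Dp n (i + 1) (j - 1 - i) * (bdelta n)⁻¹)⁻¹ := by group
    _ = Dp n i (j - 1 - i) * sigma n (i - 1) * (Dp n i (j - 1 - i))⁻¹ := by rw [hD, hs]

end BraidAux

namespace BraidAux

variable {n : ℕ}

lemma band_mem_bands {i j : ℕ} (h1 : 1 ≤ i) (hij : i < j) (hj : j ≤ n) :
    band n i j ∈ Bands n := ⟨i, j, h1, hij, hj, rfl⟩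

lemma sigma_mem_bands {k : ℕ} (h1 : 1 ≤ k) (hk : k ≤ n - 1) : sigma n k ∈ Bands n :=
  ⟨k, k + 1, h1, by omega, by omega, (band_eq_sigma k).symm⟩

lemma band_mem_SQP {i j : ℕ} (h1 : 1 ≤ i) (hij : i < j) (hj : j ≤ n) :
    band n i j ∈ SQP n := Submonoid.subset_closure (band_mem_bands h1 hij hj)

lemma Dp_mem_SQP {a m : ℕ} (h1 : 1 ≤ a) (h : a + m ≤ n) : Dp n a m ∈ SQP n := by
  induction m with
  | zero => exact one_mem _
  | succ m ih =>
    rw [Dp_succ_left]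
    exact mul_mem (Submonoid.subset_closure (sigma_mem_bands (by omega) (by omega)))
      (ih (by omega))

lemma delta_mem_SQP (hn : 1 ≤ n) : bdelta n ∈ SQP n := by
  rw [bdelta_def]; exact Dp_mem_SQP le_rfl (by omega)

lemma delta_pow_mem_SQP (hn : 1 ≤ n) (k : ℕ) : (bdelta n) ^ k ∈ SQP n :=
  pow_mem (delta_mem_SQP hn) k

lemma delta_conj_band_mem {b : BraidGroup n} (hb : b ∈ Bands n) :
    bdelta n * b * (bdelta n)⁻¹ ∈ Bands n := by
  obtain ⟨i, j, h1, hij, hj, rfl⟩ := hb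
  rcases eq_or_lt_of_le h1 with h | h
  · rw [← h, delta_conj_band_one (by omega) (by omega) hj]
    exact band_mem_bands (by omega) (by omega) le_rfl
  · rw [delta_conj_band' (by omega) hij hj]
    exact band_mem_bands (by omega) (by omega) (by omega)

lemma delta_inv_conj_band_mem {b : BraidGroup n} (hb : b ∈ Bands n) :
    (bdelta n)⁻¹ * b * bdelta n ∈ Bands n := by
  obtain ⟨i, j, h1, hij, hj, rfl⟩ := hb
  rcases eq_or_lt_of_le hj with h | h
  · -- j = n : use δ * band 1 (i+1) * δ⁻¹ = band i n
    rw [h]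
    have key := delta_conj_band_one (n := n) (by omega) (j := i + 1) (by omega) (by omega)
    rw [show i + 1 - 1 = i from rfl] at key
    have e2 : (bdelta n)⁻¹ * band n i n * bdelta n = band n 1 (i + 1) := by
      rw [← key]; group
    rw [e2]
    exact band_mem_bands le_rfl (by omega) (by omega)
  · -- j < n : use δ * band (i+1) (j+1) * δ⁻¹ = band i j
    have key := delta_conj_band' (n := n) (i := i + 1) (j := j + 1) (by omega) (by omega) (by omega)
    rw [show i + 1 - 1 = i from rfl, show j + 1 - 1 = j from rfl] at key
    have : (bdelta n)⁻¹ * band n i j * bdelta n = band n (i + 1) (j + 1) := by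
      rw [← key]; group
    rw [this]
    exact band_mem_bands (by omega) (by omega) (by omega)

lemma conj_mem_SQP {p : BraidGroup n} (hp : p ∈ SQP n) :
    bdelta n * p * (bdelta n)⁻¹ ∈ SQP n := by
  induction hp using Submonoid.closure_induction with
  | mem x hx => exact Submonoid.subset_closure (delta_conj_band_mem hx)
  | one => simpa using one_mem _
  | mul x y hx hy ihx ihy =>
    have e : bdelta n * (x * y) * (bdelta n)⁻¹
        = (bdelta n * x * (bdelta n)⁻¹) * (bdelta n * y * (bdelta n)⁻¹) := by group
    rw [e]; exact mul_mem ihx ihy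

lemma conj_inv_mem_SQP {p : BraidGroup n} (hp : p ∈ SQP n) :
    (bdelta n)⁻¹ * p * bdelta n ∈ SQP n := by
  induction hp using Submonoid.closure_induction with
  | mem x hx => exact Submonoid.subset_closure (delta_inv_conj_band_mem hx)
  | one => simpa using one_mem _
  | mul x y hx hy ihx ihy =>
    have e : (bdelta n)⁻¹ * (x * y) * bdelta n
        = ((bdelta n)⁻¹ * x * bdelta n) * ((bdelta n)⁻¹ * y * bdelta n) := by group
    rw [e]; exact mul_mem ihx ihy

lemma conj_pow_mem_SQP (k : ℕ) : ∀ {p : BraidGroup n}, p ∈ SQP n →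
    (bdelta n) ^ k * p * ((bdelta n) ^ k)⁻¹ ∈ SQP n := by
  induction k with
  | zero => intro p hp; simpa using hp
  | succ k ih =>
    intro p hp
    have e : (bdelta n) ^ (k + 1) * p * ((bdelta n) ^ (k + 1))⁻¹
        = (bdelta n) ^ k * (bdelta n * p * (bdelta n)⁻¹) * ((bdelta n) ^ k)⁻¹ := by
      rw [pow_succ]; group
    rw [e]; exact ih (conj_mem_SQP hp)

lemma conj_pow_inv_mem_SQP (k : ℕ) : ∀ {p : BraidGroup n}, p ∈ SQP n →
    ((bdelta n) ^ k)⁻¹ * p * (bdelta n) ^ k ∈ SQP n := by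
  induction k with
  | zero => intro p hp; simpa using hp
  | succ k ih =>
    intro p hp
    have e : ((bdelta n) ^ (k + 1))⁻¹ * p * (bdelta n) ^ (k + 1)
        = (bdelta n)⁻¹ * (((bdelta n) ^ k)⁻¹ * p * (bdelta n) ^ k) * bdelta n := by
      rw [pow_succ]; group
    rw [e]; exact conj_inv_mem_SQP (ih hp)

lemma sigma_one_inv_mul_delta (hn : 3 ≤ n) :
    (sigma n 1)⁻¹ * bdelta n = Dp n 3 (n - 3) * (sigma n 2 * sigma n 1 * (sigma n 2)⁻¹) := by
  have brel := braid_rel (n := n) (i := 1) (by omega) (by omega)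
  have key : (sigma n 1)⁻¹ * (sigma n 2 * sigma n 1)
      = sigma n 2 * sigma n 1 * (sigma n 2)⁻¹ := by
    set x := sigma n 1
    set y := sigma n 2
    have brel' : x * y * x = y * x * y := brel
    calc x⁻¹ * (y * x) = x⁻¹ * (y * x * y) * y⁻¹ := by group
      _ = x⁻¹ * (x * y * x) * y⁻¹ := by rw [brel']
      _ = y * x * y⁻¹ := by group
  have e : bdelta n = Dp n 3 (n - 3) * (sigma n 2 * sigma n 1) := by
    have h := Dp_split (n := n) 1 2 (n - 3)
    rw [show (1 : ℕ) + 2 = 3 from rfl] at h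
    have h2 : Dp n 1 2 = sigma n 2 * sigma n 1 := by
      rw [Dp_succ_left, Dp_one]
    rw [h2] at h
    exact (bdelta_def.trans (Dp_congr (by omega))).trans h
  have c : Commute ((sigma n 1)⁻¹) (Dp n 3 (n - 3)) := by
    refine Commute.inv_left (sigma_comm_Dp fun x hx hx' => ?_)
    exact commute_of_braid_comm (i := 1) (j := x) le_rfl (by omega) (by omega)
  calc (sigma n 1)⁻¹ * bdelta n
      = (sigma n 1)⁻¹ * Dp n 3 (n - 3) * (sigma n 2 * sigma n 1) := by rw [e]; group
    _ = Dp n 3 (n - 3) * (sigma n 1)⁻¹ * (sigma n 2 * sigma n 1) := by rw [c.eq]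
    _ = Dp n 3 (n - 3) * ((sigma n 1)⁻¹ * (sigma n 2 * sigma n 1)) := by group
    _ = Dp n 3 (n - 3) * (sigma n 2 * sigma n 1 * (sigma n 2)⁻¹) := by rw [key]

lemma band_one_three (hn : 3 ≤ n) :
    band n 1 3 = sigma n 2 * sigma n 1 * (sigma n 2)⁻¹ := by
  rw [band_def, show (3 : ℕ) - 1 - 1 = 1 from rfl, Dp_one]

lemma Dp_conj_band_one_three {m : ℕ} (hn : 3 ≤ n) (hm : 3 + m ≤ n) :
    Dp n 3 m * band n 1 3 * (Dp n 3 m)⁻¹ = band n 1 (m + 3) := by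
  induction m with
  | zero => simp
  | succ m ih =>
    rw [Dp_succ_left, show (3 : ℕ) + m = m + 3 by omega]
    have hb : sigma n (m + 3) * band n 1 (m + 3) * (sigma n (m + 3))⁻¹ = band n 1 (m + 1 + 3) := by
      have h := band_succ (n := n) (i := 1) (j := m + 3) (by omega)
      rw [show m + 3 + 1 = m + 1 + 3 by omega] at h
      exact h.symm
    calc sigma n (m + 3) * Dp n 3 m * (band n 1 3) * (sigma n (m + 3) * Dp n 3 m)⁻¹
        = sigma n (m + 3) * (Dp n 3 m * band n 1 3 * (Dp n 3 m)⁻¹) * (sigma n (m + 3))⁻¹ := by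
          group
      _ = sigma n (m + 3) * band n 1 (m + 3) * (sigma n (m + 3))⁻¹ := by rw [ih (by omega)]
      _ = band n 1 (m + 1 + 3) := hb

lemma band_one_inv_mul_delta (hn : 3 ≤ n) {j : ℕ} (h2 : 2 ≤ j) (hj : j ≤ n) :
    (band n 1 j)⁻¹ * bdelta n ∈ SQP n := by
  by_cases hjn : j = n
  · rw [hjn]
    have e := band_one_n_def (n := n) (by omega)
    have ed := delta_eq_Dp_mul_sigma_one (n := n) (by omega)
    have : (band n 1 n)⁻¹ * bdelta n = Dp n 2 (n - 2) := by
      rw [e]; conv_lhs => rw [ed]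
      group
    rw [this]; exact Dp_mem_SQP (by omega) (by omega)
  · have hj' : j + 1 ≤ n := by omega
    have hA := delta_conj_Dp (n := n) (a := 3) (m := j - 2) (by omega) (by omega)
    rw [show (3 : ℕ) - 1 = 2 from rfl] at hA
    have hC := Dp_conj_band_one_three (n := n) (m := j - 2) hn (by omega)
    rw [show j - 2 + 3 = j + 1 by omega] at hC
    have hD : Dp n 3 (n - 3) = Dp n (j + 1) (n - 1 - j) * Dp n 3 (j - 2) := by
      have h := Dp_split (n := n) 3 (j - 2) (n - 1 - j)
      rw [show 3 + (j - 2) = j + 1 by omega] at h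
      exact (Dp_congr (by omega)).trans h
    have h1 : (band n 1 j)⁻¹ * bdelta n
        = Dp n 2 (j - 2) * ((sigma n 1)⁻¹ * ((Dp n 2 (j - 2))⁻¹ * bdelta n)) := by
      rw [band_def, show j - 1 - 1 = j - 2 by omega]; group
    have h2' : (Dp n 2 (j - 2))⁻¹ * bdelta n = bdelta n * (Dp n 3 (j - 2))⁻¹ := by
      rw [← hA]; group
    have h4 : band n 1 3 * (Dp n 3 (j - 2))⁻¹ = (Dp n 3 (j - 2))⁻¹ * band n 1 (j + 1) := by
      rw [← hC]; group
    have h5 : Dp n 3 (n - 3) * (Dp n 3 (j - 2))⁻¹ = Dp n (j + 1) (n - 1 - j) := by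
      rw [hD]; group
    have main : (band n 1 j)⁻¹ * bdelta n
        = Dp n 2 (j - 2) * Dp n (j + 1) (n - 1 - j) * band n 1 (j + 1) := by
      rw [h1, h2']
      calc Dp n 2 (j - 2) * ((sigma n 1)⁻¹ * (bdelta n * (Dp n 3 (j - 2))⁻¹))
          = Dp n 2 (j - 2) * (((sigma n 1)⁻¹ * bdelta n) * (Dp n 3 (j - 2))⁻¹) := by group
        _ = Dp n 2 (j - 2) * ((Dp n 3 (n - 3) * band n 1 3) * (Dp n 3 (j - 2))⁻¹) := by
            rw [sigma_one_inv_mul_delta hn, band_one_three hn]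
        _ = Dp n 2 (j - 2) * (Dp n 3 (n - 3) * (band n 1 3 * (Dp n 3 (j - 2))⁻¹)) := by group
        _ = Dp n 2 (j - 2) * (Dp n 3 (n - 3) * ((Dp n 3 (j - 2))⁻¹ * band n 1 (j + 1))) := by
            rw [h4]
        _ = Dp n 2 (j - 2) * ((Dp n 3 (n - 3) * (Dp n 3 (j - 2))⁻¹) * band n 1 (j + 1)) := by
            group
        _ = Dp n 2 (j - 2) * (Dp n (j + 1) (n - 1 - j) * band n 1 (j + 1)) := by rw [h5]
        _ = Dp n 2 (j - 2) * Dp n (j + 1) (n - 1 - j) * band n 1 (j + 1) := by group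
    rw [main]
    exact mul_mem (mul_mem (Dp_mem_SQP (by omega) (by omega))
      (Dp_mem_SQP (by omega) (by omega))) (band_mem_SQP le_rfl (by omega) hj')

lemma band_inv_mul_delta (hn : 3 ≤ n) {i j : ℕ} (h1 : 1 ≤ i) (hij : i < j) (hj : j ≤ n) :
    (band n i j)⁻¹ * bdelta n ∈ SQP n := by
  induction i, h1 using Nat.le_induction generalizing j with
  | base => exact band_one_inv_mul_delta hn (by omega) hj
  | succ i hi ih =>
    have key := delta_conj_band' (n := n) (i := i + 1) (j := j) (by omega) hij hj
    rw [show i + 1 - 1 = i from rfl] at key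
    have e : (band n (i + 1) j)⁻¹ * bdelta n
        = (bdelta n)⁻¹ * ((band n i (j - 1))⁻¹ * bdelta n) * bdelta n := by
      rw [← key]; group
    rw [e]
    exact conj_inv_mem_SQP (ih (by omega) (by omega))

lemma delta_mul_band_inv (hn : 3 ≤ n) {i j : ℕ} (h1 : 1 ≤ i) (hij : i < j) (hj : j ≤ n) :
    bdelta n * (band n i j)⁻¹ ∈ SQP n := by
  have hb := delta_conj_band_mem (n := n) (band_mem_bands h1 hij hj)
  obtain ⟨i', j', h1', hij', hj', e⟩ := hb
  have : bdelta n * (band n i j)⁻¹ = (band n i' j')⁻¹ * bdelta n := by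
    rw [← e]; group
  rw [this]
  exact band_inv_mul_delta hn h1' hij' hj'

end BraidAux

namespace BraidAux

variable {n : ℕ}

lemma exists_inv_mul_delta_pow (hn : 3 ≤ n) {p : BraidGroup n} (hp : p ∈ SQP n) :
    ∃ k : ℕ, p⁻¹ * (bdelta n) ^ k ∈ SQP n := by
  induction hp using Submonoid.closure_induction with
  | mem x hx =>
    obtain ⟨i, j, h1, hij, hj, rfl⟩ := hx
    exact ⟨1, by simpa [pow_one] using band_inv_mul_delta hn h1 hij hj⟩
  | one => exact ⟨0, by simpa using one_mem _⟩
  | mul x y hx hy ihx ihy =>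
    obtain ⟨kx, hkx⟩ := ihx
    obtain ⟨ky, hky⟩ := ihy
    refine ⟨kx + ky, ?_⟩
    have e : (x * y)⁻¹ * (bdelta n) ^ (kx + ky)
        = (y⁻¹ * (bdelta n) ^ ky) *
          (((bdelta n) ^ ky)⁻¹ * (x⁻¹ * (bdelta n) ^ kx) * (bdelta n) ^ ky) := by
      rw [pow_add]; group
    rw [e]
    exact mul_mem hky (conj_pow_inv_mem_SQP ky hkx)

lemma exists_delta_pow_mul_inv (hn : 3 ≤ n) {p : BraidGroup n} (hp : p ∈ SQP n) :
    ∃ k : ℕ, (bdelta n) ^ k * p⁻¹ ∈ SQP n := by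
  induction hp using Submonoid.closure_induction with
  | mem x hx =>
    obtain ⟨i, j, h1, hij, hj, rfl⟩ := hx
    exact ⟨1, by simpa [pow_one] using delta_mul_band_inv hn h1 hij hj⟩
  | one => exact ⟨0, by simpa using one_mem _⟩
  | mul x y hx hy ihx ihy =>
    obtain ⟨kx, hkx⟩ := ihx
    obtain ⟨ky, hky⟩ := ihy
    refine ⟨kx + ky, ?_⟩
    have e : (bdelta n) ^ (kx + ky) * (x * y)⁻¹
        = ((bdelta n) ^ kx * ((bdelta n) ^ ky * y⁻¹) * ((bdelta n) ^ kx)⁻¹) *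
          ((bdelta n) ^ kx * x⁻¹) := by
      rw [pow_add]; group
    rw [e]
    exact mul_mem (conj_pow_mem_SQP kx hky) hkx

lemma of_eq_sigma (x : Fin (n - 1)) :
    (PresentedGroup.of x : BraidGroup n) = sigma n ((x : ℕ) + 1) := by
  rw [sigma_eq_of (by omega) (by omega)]
  congr 1

lemma exists_rep (hn : 3 ≤ n) (β : BraidGroup n) :
    ∃ (N : ℕ) (P Q : BraidGroup n), P ∈ SQP n ∧ Q ∈ SQP n ∧
      β = P * ((bdelta n) ^ N)⁻¹ * Q := by
  obtain ⟨w, rfl⟩ := QuotientGroup.mk_surjective (s := Subgroup.normalClosure (braidRels n)) β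
  induction w using FreeGroup.induction_on with
  | C1 => exact ⟨0, 1, 1, one_mem _, one_mem _, by simp; rfl⟩
  | of x =>
    refine ⟨0, sigma n ((x : ℕ) + 1), 1, ?_, one_mem _, ?_⟩
    · exact Submonoid.subset_closure (sigma_mem_bands (by omega) (by omega))
    · have h : (QuotientGroup.mk (FreeGroup.of x) : BraidGroup n) = PresentedGroup.of x := rfl
      rw [h, of_eq_sigma]; simp
  | inv_of x _ =>
    refine ⟨1, (sigma n ((x : ℕ) + 1))⁻¹ * bdelta n, 1, ?_, one_mem _, ?_⟩
    · have hb : band n ((x : ℕ) + 1) ((x : ℕ) + 2) = sigma n ((x : ℕ) + 1) :=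
        band_eq_sigma _
      have := band_inv_mul_delta hn (i := (x : ℕ) + 1) (j := (x : ℕ) + 2)
        (by omega) (by omega) (by omega)
      rwa [hb] at this
    · have h : (QuotientGroup.mk (FreeGroup.of x)⁻¹ : BraidGroup n)
          = (sigma n ((x : ℕ) + 1))⁻¹ := by
        rw [QuotientGroup.mk_inv]
        have h2 : (QuotientGroup.mk (FreeGroup.of x) : BraidGroup n) = PresentedGroup.of x := rfl
        rw [h2, of_eq_sigma]; rfl
      rw [h, pow_one]; group
  | mul x y ihx ihy =>
    obtain ⟨Nx, Px, Qx, hPx, hQx, ex⟩ := ihx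
    obtain ⟨Ny, Py, Qy, hPy, hQy, ey⟩ := ihy
    refine ⟨Nx + Ny, Px, ((bdelta n) ^ Ny * (Qx * Py) * ((bdelta n) ^ Ny)⁻¹) * Qy,
      hPx, mul_mem (conj_pow_mem_SQP Ny (mul_mem hQx hPy)) hQy, ?_⟩
    rw [QuotientGroup.mk_mul, ex, ey, pow_add]
    show Px * (bdelta n ^ Nx)⁻¹ * Qx * (Py * (bdelta n ^ Ny)⁻¹ * Qy) = Px * ((bdelta n) ^ Nx *
      (bdelta n) ^ Ny)⁻¹ * (((bdelta n) ^ Ny * (Qx * Py) * ((bdelta n) ^ Ny)⁻¹) * Qy)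
    group

end BraidAux

namespace BraidAux

variable {n : ℕ}

lemma writhe_mul (a b : BraidGroup n) : writhe n (a * b) = writhe n a + writhe n b := by
  simp [writhe, map_mul]

lemma writhe_inv (a : BraidGroup n) : writhe n a⁻¹ = - writhe n a := by
  simp [writhe, map_inv]

lemma writhe_conj (a b : BraidGroup n) : writhe n (a * b * a⁻¹) = writhe n b := by
  rw [writhe_mul, writhe_mul, writhe_inv]; ring

lemma writhe_sigma {k : ℕ} (h1 : 1 ≤ k) (hk : k ≤ n - 1) : writhe n (sigma n k) = 1 := by
  rw [sigma_eq_of h1 hk, writhe, writheHom, PresentedGroup.toGroup.of]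
  simp

lemma writhe_band {i j : ℕ} (h1 : 1 ≤ i) (hij : i < j) (hj : j ≤ n) :
    writhe n (band n i j) = 1 := by
  rw [band_def, writhe_conj, writhe_sigma h1 (by omega)]

lemma writhe_nonneg_SQP {p : BraidGroup n} (hp : p ∈ SQP n) : 0 ≤ writhe n p := by
  induction hp using Submonoid.closure_induction with
  | mem x hx =>
    obtain ⟨i, j, h1, hij, hj, rfl⟩ := hx
    rw [writhe_band h1 hij hj]; norm_num
  | one => simp [writhe]
  | mul x y hx hy ihx ihy => rw [writhe_mul]; omega

lemma writhe_Dp {a m : ℕ} (h1 : 1 ≤ a) (h : a + m ≤ n) : writhe n (Dp n a m) = m := by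
  induction m with
  | zero => simp [writhe]
  | succ m ih =>
    rw [Dp_succ_left, writhe_mul, writhe_sigma (by omega) (by omega), ih (by omega)]
    push_cast; ring

lemma writhe_delta (hn : 1 ≤ n) : writhe n (bdelta n) = (n : ℤ) - 1 := by
  rw [bdelta_def, writhe_Dp le_rfl (by omega)]
  omega

lemma writhe_zpow (x : BraidGroup n) (r : ℤ) : writhe n (x ^ r) = r * writhe n x := by
  simp [writhe, map_zpow, toAdd_zpow]

lemma S_nonempty (hn : 3 ≤ n) (β : BraidGroup n) :
    {r : ℤ | bble n (bdelta n ^ r) β}.Nonempty := by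
  obtain ⟨N, P, Q, hP, hQ, he⟩ := exists_rep hn β
  exact ⟨-(N : ℤ), P, hP, Q, hQ, by rw [zpow_neg, zpow_natCast]; exact he⟩

lemma S_bddAbove (hn : 3 ≤ n) (β : BraidGroup n) :
    BddAbove {r : ℤ | bble n (bdelta n ^ r) β} := by
  refine ⟨max 0 (writhe n β), fun r hr => ?_⟩
  obtain ⟨P, hP, Q, hQ, he⟩ := hr
  have hw : writhe n β = writhe n P + r * ((n : ℤ) - 1) + writhe n Q := by
    rw [he, writhe_mul, writhe_mul, writhe_zpow, writhe_delta (by omega)]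
  have hP' := writhe_nonneg_SQP hP
  have hQ' := writhe_nonneg_SQP hQ
  have h2 : r * ((n : ℤ) - 1) ≤ writhe n β := by linarith
  rcases le_or_gt r 0 with h | h
  · exact le_trans h (le_max_left _ _)
  · refine le_trans ?_ (le_max_right _ _)
    have hn' : (3 : ℤ) ≤ (n : ℤ) := by exact_mod_cast hn
    nlinarith

lemma zero_mem_S_iff (β : BraidGroup n) :
    bble n (bdelta n ^ (0 : ℤ)) β ↔ β ∈ SQP n := by
  constructor
  · rintro ⟨P, hP, Q, hQ, he⟩
    rw [zpow_zero, mul_one] at he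
    rw [he]; exact mul_mem hP hQ
  · intro hβ
    exact ⟨β, hβ, 1, one_mem _, by simp⟩

lemma binf_le_neg_one_iff (hn : 3 ≤ n) (β : BraidGroup n) :
    binf n β ≤ -1 ↔ β ∉ SQP n := by
  have hne := S_nonempty hn β
  have hbdd := S_bddAbove hn β
  constructor
  · intro h hβ
    have h0 : (0 : ℤ) ∈ {r : ℤ | bble n (bdelta n ^ r) β} := (zero_mem_S_iff β).mpr hβ
    have := le_csSup hbdd h0
    rw [binf] at h
    omega
  · intro hβ
    by_contra hlt
    push_neg at hlt
    rw [binf] at hlt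
    have hmem := Int.csSup_mem hne hbdd
    obtain ⟨P, hP, Q, hQ, he⟩ := hmem
    set s := sSup {r : ℤ | bble n (bdelta n ^ r) β} with hs
    have hs0 : 0 ≤ s := by omega
    have : bdelta n ^ s = bdelta n ^ s.toNat := by
      rw [← zpow_natCast]; congr 1; omega
    rw [this] at he
    exact hβ (he ▸ mul_mem (mul_mem hP (delta_pow_mem_SQP (by omega) _)) hQ)

end BraidAux

namespace BraidAux

variable {n : ℕ}

lemma represents_append {W₁ W₂ : List (ℕ × ℕ × Bool)} {β₁ β₂ : BraidGroup n}
    (h₁ : Represents n W₁ β₁) (h₂ : Represents n W₂ β₂) :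
    Represents n (W₁ ++ W₂) (β₁ * β₂) := by
  refine ⟨fun l hl => ?_, ?_⟩
  · rcases List.mem_append.mp hl with h | h
    exacts [h₁.1 l h, h₂.1 l h]
  · rw [List.map_append, List.prod_append, h₁.2, h₂.2]

lemma represents_sigma {k : ℕ} (h1 : 1 ≤ k) (hk : k ≤ n - 1) :
    Represents n [(k, k + 1, true)] (sigma n k) := by
  refine ⟨fun l hl => ?_, ?_⟩
  · simp only [List.mem_singleton] at hl
    subst hl
    exact ⟨h1, by show k < k + 1; omega, by show k + 1 ≤ n; omega⟩
  · simp [evalLetter, band_eq_sigma]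

lemma represents_sigma_inv {k : ℕ} (h1 : 1 ≤ k) (hk : k ≤ n - 1) :
    Represents n [(k, k + 1, false)] (sigma n k)⁻¹ := by
  refine ⟨fun l hl => ?_, ?_⟩
  · simp only [List.mem_singleton] at hl
    subst hl
    exact ⟨h1, by show k < k + 1; omega, by show k + 1 ≤ n; omega⟩
  · simp [evalLetter, band_eq_sigma]

lemma exists_word (hn : 3 ≤ n) (β : BraidGroup n) : ∃ W, Represents n W β := by
  obtain ⟨w, rfl⟩ := QuotientGroup.mk_surjective (s := Subgroup.normalClosure (braidRels n)) β
  induction w using FreeGroup.induction_on with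
  | C1 => exact ⟨[], fun l hl => absurd hl List.not_mem_nil, by simp; rfl⟩
  | of x =>
    refine ⟨[((x : ℕ) + 1, (x : ℕ) + 2, true)], ?_⟩
    have h : (QuotientGroup.mk (FreeGroup.of x) : BraidGroup n) = sigma n ((x : ℕ) + 1) := by
      have h2 : (QuotientGroup.mk (FreeGroup.of x) : BraidGroup n) = PresentedGroup.of x := rfl
      rw [h2, of_eq_sigma]
    rw [h]
    have := represents_sigma (n := n) (k := (x : ℕ) + 1) (by omega) (by omega)
    simpa using this
  | inv_of x _ =>
    refine ⟨[((x : ℕ) + 1, (x : ℕ) + 2, false)], ?_⟩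
    have h : (QuotientGroup.mk (FreeGroup.of x)⁻¹ : BraidGroup n) = (sigma n ((x : ℕ) + 1))⁻¹ := by
      rw [QuotientGroup.mk_inv]
      have h2 : (QuotientGroup.mk (FreeGroup.of x) : BraidGroup n) = PresentedGroup.of x := rfl
      rw [h2, of_eq_sigma]; rfl
    rw [h]
    have := represents_sigma_inv (n := n) (k := (x : ℕ) + 1) (by omega) (by omega)
    simpa using this
  | mul x y ihx ihy =>
    obtain ⟨W₁, h₁⟩ := ihx
    obtain ⟨W₂, h₂⟩ := ihy
    exact ⟨W₁ ++ W₂, by rw [QuotientGroup.mk_mul]; exact represents_append h₁ h₂⟩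

lemma nbWord_append (W₁ W₂ : List (ℕ × ℕ × Bool)) :
    nbWord (W₁ ++ W₂) = nbWord W₁ + nbWord W₂ := by
  simp [nbWord, List.filter_append]

lemma mem_SQP_exists_pos_word {β : BraidGroup n} (hβ : β ∈ SQP n) :
    ∃ W, Represents n W β ∧ nbWord W = 0 := by
  induction hβ using Submonoid.closure_induction with
  | mem x hx =>
    obtain ⟨i, j, h1, hij, hj, rfl⟩ := hx
    refine ⟨[(i, j, true)], ⟨fun l hl => ?_, ?_⟩, ?_⟩
    · simp only [List.mem_singleton] at hl
      subst hl
      exact ⟨h1, hij, hj⟩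
    · simp [evalLetter]
    · simp [nbWord]
  | one => exact ⟨[], ⟨fun l hl => absurd hl List.not_mem_nil, by simp⟩, by simp [nbWord]⟩
  | mul x y hx hy ihx ihy =>
    obtain ⟨W₁, h₁, hn₁⟩ := ihx
    obtain ⟨W₂, h₂, hn₂⟩ := ihy
    exact ⟨W₁ ++ W₂, represents_append h₁ h₂, by rw [nbWord_append, hn₁, hn₂]⟩

lemma pos_word_mem_SQP {β : BraidGroup n} {W : List (ℕ × ℕ × Bool)}
    (hW : Represents n W β) (h0 : nbWord W = 0) : β ∈ SQP n := by
  have hall : ∀ l ∈ W, l.2.2 = true := by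
    intro l hl
    by_contra hf
    have hmem : l ∈ W.filter (fun l => !l.2.2) :=
      List.mem_filter.mpr ⟨hl, by simp [Bool.not_eq_true] at hf; simp [hf]⟩
    rw [nbWord, List.length_eq_zero_iff] at h0
    rw [h0] at hmem
    exact absurd hmem List.not_mem_nil
  rw [← hW.2]
  refine Submonoid.list_prod_mem _ fun x hx => ?_
  obtain ⟨l, hl, rfl⟩ := List.mem_map.mp hx
  obtain ⟨h1, hij, hj⟩ := hW.1 l hl
  have he : evalLetter n l = band n l.1 l.2.1 := by
    rw [evalLetter, if_pos (hall l hl)]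
  rw [he]
  exact band_mem_SQP h1 hij hj

lemma one_le_nb_iff (hn : 3 ≤ n) (β : BraidGroup n) : 1 ≤ nb n β ↔ β ∉ SQP n := by
  have hT : {m : ℕ | ∃ W, Represents n W β ∧ nbWord W = m}.Nonempty := by
    obtain ⟨W, hW⟩ := exists_word hn β
    exact ⟨nbWord W, W, hW, rfl⟩
  rw [nb, Nat.one_le_iff_ne_zero, Ne, Nat.sInf_eq_zero]
  constructor
  · intro h hβ
    obtain ⟨W, hW, h0⟩ := mem_SQP_exists_pos_word hβ
    exact h (Or.inl ⟨W, hW, h0⟩)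
  · rintro hβ (⟨W, hW, h0⟩ | hemp)
    · exact hβ (pos_word_mem_SQP hW h0)
    · exact hT.ne_empty hemp

end BraidAux

/-- For `n ≥ 3` and `β ∈ B_n`, `nb(β) ≥ 1` iff `inf(β) ≤ -1`. -/
theorem statement_1 (n : ℕ) (hn : 3 ≤ n) (β : BraidGroup n) :
    1 ≤ nb n β ↔ binf n β ≤ -1 :=
  (BraidAux.one_le_nb_iff hn β).trans (BraidAux.binf_le_neg_one_iff hn β).symm
end

section
/- Let n ≥ 3 and β ∈ B_n with inf(β) ≤ −1. Then 0 < −inf(β) ≤ nb(β); that is, |inf(β)| is a lower bound for the negative band number of β. -/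
namespace StmtAux

open List

/-- `fall n a b = σ_{a+b-1} σ_{a+b-2} ⋯ σ_a`. -/
noncomputable def fall (n a b : ℕ) : BraidGroup n :=
  (((List.range' a b).reverse.map (sigma n)).prod)

lemma bdelta_eq (n : ℕ) : bdelta n = fall n 1 (n - 1) := rfl

lemma band_eq (n i j : ℕ) :
    band n i j = fall n (i + 1) (j - 1 - i) * sigma n i * (fall n (i + 1) (j - 1 - i))⁻¹ := rfl

lemma fall_zero (n a : ℕ) : fall n a 0 = 1 := rfl

lemma fall_one (n a : ℕ) : fall n a 1 = sigma n a := by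
  simp [fall, List.range']

lemma fall_add (n a b c : ℕ) : fall n a (c + b) = fall n (a + b) c * fall n a b := by
  unfold fall
  rw [show c + b = b + c from add_comm c b, ← List.range'_append, List.reverse_append, List.map_append, List.prod_append,
    one_mul]

lemma fall_succ_left (n a b : ℕ) : fall n a (b + 1) = sigma n (a + b) * fall n a b := by
  have h := fall_add n a b 1
  rw [add_comm 1 b] at h
  rw [h, fall_one]

lemma fall_succ_right (n a b : ℕ) : fall n a (b + 1) = fall n (a + 1) b * sigma n a := by
  have h := fall_add n a 1 b
  simpa [fall_one] using h

lemma rel_one {n : ℕ} {r : FreeGroup (Fin (n - 1))} (hr : r ∈ braidRels n) :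
    PresentedGroup.mk (braidRels n) r = 1 := by
  exact (QuotientGroup.eq_one_iff r).2 (Subgroup.subset_normalClosure hr)

lemma braid_comm (n k l : ℕ) (hk : 1 ≤ k) (hkl : k + 2 ≤ l) :
    sigma n k * sigma n l = sigma n l * sigma n k := by
  by_cases hl : l - 1 < n - 1
  · have hk' : k - 1 < n - 1 := by omega
    set i : Fin (n - 1) := ⟨k - 1, hk'⟩
    set j : Fin (n - 1) := ⟨l - 1, hl⟩
    have hr : (FreeGroup.of i * FreeGroup.of j * (FreeGroup.of i)⁻¹ * (FreeGroup.of j)⁻¹)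
        ∈ braidRels n := Or.inl ⟨i, j, by simp [i, j]; omega, rfl⟩
    have h1 : (PresentedGroup.of i * PresentedGroup.of j * (PresentedGroup.of i)⁻¹ *
        (PresentedGroup.of j)⁻¹ : BraidGroup n) = 1 := by
      simpa [map_mul, map_inv, PresentedGroup.of] using rel_one hr
    have h2 : (PresentedGroup.of i * PresentedGroup.of j : BraidGroup n) =
        PresentedGroup.of j * PresentedGroup.of i := by
      calc (PresentedGroup.of i * PresentedGroup.of j : BraidGroup n)
          = (PresentedGroup.of i * PresentedGroup.of j * (PresentedGroup.of i)⁻¹ *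
              (PresentedGroup.of j)⁻¹) * (PresentedGroup.of j * PresentedGroup.of i) := by
            group
        _ = PresentedGroup.of j * PresentedGroup.of i := by rw [h1, one_mul]
    unfold sigma
    rw [dif_pos hl, dif_pos hk']
    exact h2
  · unfold sigma
    rw [dif_neg hl]
    simp

lemma braid_rel (n k : ℕ) (hk : 1 ≤ k) (hk2 : k + 1 ≤ n - 1) :
    sigma n k * sigma n (k + 1) * sigma n k = sigma n (k + 1) * sigma n k * sigma n (k + 1) := by
  have hk' : k - 1 < n - 1 := by omega
  have hk1' : k + 1 - 1 < n - 1 := by omega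
  set i : Fin (n - 1) := ⟨k - 1, hk'⟩
  set j : Fin (n - 1) := ⟨k + 1 - 1, hk1'⟩
  have hr : (FreeGroup.of i * FreeGroup.of j * FreeGroup.of i *
      (FreeGroup.of j * FreeGroup.of i * FreeGroup.of j)⁻¹) ∈ braidRels n :=
    Or.inr ⟨i, j, by simp [i, j]; omega, rfl⟩
  have h1 : (PresentedGroup.of i * PresentedGroup.of j * PresentedGroup.of i *
      (PresentedGroup.of j * PresentedGroup.of i * PresentedGroup.of j)⁻¹ : BraidGroup n) = 1 := by
    simpa [map_mul, map_inv, PresentedGroup.of] using rel_one hr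
  have h2 : (PresentedGroup.of i * PresentedGroup.of j * PresentedGroup.of i : BraidGroup n) =
      PresentedGroup.of j * PresentedGroup.of i * PresentedGroup.of j := by
    calc (PresentedGroup.of i * PresentedGroup.of j * PresentedGroup.of i : BraidGroup n)
        = (PresentedGroup.of i * PresentedGroup.of j * PresentedGroup.of i *
            (PresentedGroup.of j * PresentedGroup.of i * PresentedGroup.of j)⁻¹) *
            (PresentedGroup.of j * PresentedGroup.of i * PresentedGroup.of j) := by group
      _ = _ := by rw [h1, one_mul]
  unfold sigma
  rw [dif_pos hk', dif_pos hk1']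
  exact h2

/-- `σ_k` commutes with `σ_j ⋯ σ_1` when `k ≥ j + 2`. -/
lemma fall_comm_sigma (n : ℕ) : ∀ j k : ℕ, j + 2 ≤ k →
    fall n 1 j * sigma n k = sigma n k * fall n 1 j := by
  intro j
  induction j with
  | zero => intro k _; simp [fall_zero]
  | succ j ih =>
    intro k hk
    rw [fall_succ_left, mul_assoc, ih k (by omega), ← mul_assoc,
      braid_comm n (1 + j) k (by omega) (by omega), mul_assoc]

/-- The fundamental shift relation `(σ_m ⋯ σ_1) σ_k = σ_{k-1} (σ_m ⋯ σ_1)`. -/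
lemma F_mul_sigma (n k m : ℕ) (hk : 2 ≤ k) (hkm : k ≤ m) (hm : m ≤ n - 1) :
    fall n 1 m * sigma n k = sigma n (k - 1) * fall n 1 m := by
  induction m, hkm using Nat.le_induction with
  | base =>
    obtain ⟨t, rfl⟩ : ∃ t, k = t + 2 := ⟨k - 2, by omega⟩
    have e : fall n 1 (t + 2) = sigma n (t + 2) * (sigma n (t + 1) * fall n 1 t) := by
      rw [fall_succ_left n 1 (t + 1), fall_succ_left n 1 t,
        show 1 + (t + 1) = t + 2 from by omega, show 1 + t = t + 1 from by omega]
    have hc : fall n 1 t * sigma n (t + 2) = sigma n (t + 2) * fall n 1 t :=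
      fall_comm_sigma n t (t + 2) (by omega)
    have hb : sigma n (t + 2) * sigma n (t + 1) * sigma n (t + 2)
        = sigma n (t + 1) * sigma n (t + 2) * sigma n (t + 1) :=
      (braid_rel n (t + 1) (by omega) (by omega)).symm
    have : t + 2 - 1 = t + 1 := by omega
    rw [this, e]
    calc sigma n (t + 2) * (sigma n (t + 1) * fall n 1 t) * sigma n (t + 2)
        = sigma n (t + 2) * sigma n (t + 1) * (fall n 1 t * sigma n (t + 2)) := by group
      _ = sigma n (t + 2) * sigma n (t + 1) * (sigma n (t + 2) * fall n 1 t) := by rw [hc]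
      _ = sigma n (t + 2) * sigma n (t + 1) * sigma n (t + 2) * fall n 1 t := by group
      _ = sigma n (t + 1) * sigma n (t + 2) * sigma n (t + 1) * fall n 1 t := by rw [hb]
      _ = sigma n (t + 1) * (sigma n (t + 2) * (sigma n (t + 1) * fall n 1 t)) := by group
  | succ m hm' ih =>
    have ih' := ih (by omega)
    rw [fall_succ_left]
    calc sigma n (1 + m) * fall n 1 m * sigma n k
        = sigma n (1 + m) * (fall n 1 m * sigma n k) := by group
      _ = sigma n (1 + m) * (sigma n (k - 1) * fall n 1 m) := by rw [ih']
      _ = (sigma n (1 + m) * sigma n (k - 1)) * fall n 1 m := by group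
      _ = (sigma n (k - 1) * sigma n (1 + m)) * fall n 1 m := by
            rw [braid_comm n (k - 1) (1 + m) (by omega) (by omega)]
      _ = sigma n (k - 1) * (sigma n (1 + m) * fall n 1 m) := by group

/-- Shift of a whole descending block past `σ_m ⋯ σ_1`. -/
lemma F_mul_fall (n : ℕ) (m : ℕ) (hm : m ≤ n - 1) :
    ∀ b a : ℕ, 2 ≤ a → a + b ≤ m + 1 →
    fall n 1 m * fall n a b = fall n (a - 1) b * fall n 1 m := by
  intro b
  induction b with
  | zero => intro a _ _; simp [fall_zero]
  | succ b ih =>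
    intro a ha hab
    obtain ⟨s, rfl⟩ : ∃ s, a = s + 2 := ⟨a - 2, by omega⟩
    have h1 : fall n (s + 2) (b + 1) = sigma n (s + 2 + b) * fall n (s + 2) b :=
      fall_succ_left n (s + 2) b
    have h2 : fall n (s + 2 - 1) (b + 1) = sigma n (s + 1 + b) * fall n (s + 2 - 1) b := by
      have := fall_succ_left n (s + 1) b
      simpa using this
    have h3 : fall n 1 m * sigma n (s + 2 + b) = sigma n (s + 1 + b) * fall n 1 m := by
      have := F_mul_sigma n (s + 2 + b) m (by omega) (by omega) hm
      simpa [show s + 2 + b - 1 = s + 1 + b by omega] using this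
    have h4 := ih (s + 2) ha (by omega)
    rw [h1, h2]
    calc fall n 1 m * (sigma n (s + 2 + b) * fall n (s + 2) b)
        = (fall n 1 m * sigma n (s + 2 + b)) * fall n (s + 2) b := by group
      _ = (sigma n (s + 1 + b) * fall n 1 m) * fall n (s + 2) b := by rw [h3]
      _ = sigma n (s + 1 + b) * (fall n 1 m * fall n (s + 2) b) := by group
      _ = sigma n (s + 1 + b) * (fall n (s + 2 - 1) b * fall n 1 m) := by rw [h4]
      _ = sigma n (s + 1 + b) * fall n (s + 2 - 1) b * fall n 1 m := by group

end StmtAux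

namespace StmtAux

lemma delta_mul_sigma (n k : ℕ) (h1 : 2 ≤ k) (h2 : k ≤ n - 1) :
    bdelta n * sigma n k = sigma n (k - 1) * bdelta n := by
  rw [bdelta_eq]
  exact F_mul_sigma n k (n - 1) h1 h2 le_rfl

lemma delta_mul_fall (n a b : ℕ) (ha : 2 ≤ a) (hab : a + b ≤ n) :
    bdelta n * fall n a b = fall n (a - 1) b * bdelta n := by
  rw [bdelta_eq]
  exact F_mul_fall n (n - 1) le_rfl b a ha (by omega)

/-- Conjugation by `δ` permutes the band generators. -/
lemma delta_conj_band (n i j : ℕ) (hi : 1 ≤ i) (hij : i < j) (hj : j ≤ n) :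
    bdelta n * band n i j * (bdelta n)⁻¹ ∈ Bands n := by
  rcases Nat.lt_or_ge i 2 with h2 | h2
  · -- i = 1
    have hi1 : i = 1 := by omega
    subst hi1
    set δ := bdelta n with hδdef
    set D := fall n j (n - j) with hD
    set E := fall n 1 (j - 1) with hE0
    set C := fall n 2 (j - 2) with hC0
    set F := fall n 1 (j - 2) with hF0
    have hsplit : δ = D * E := by
      have h := fall_add n 1 (j - 1) (n - j)
      rw [show 1 + (j - 1) = j from by omega] at h
      have e1 : fall n 1 (n - 1) = fall n 1 (n - j + (j - 1)) :=
        congrArg (fall n 1) (by omega)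
      rw [hδdef, bdelta_eq, e1, h]
    have hEC : E * C = F * E := by
      have := F_mul_fall n (j - 1) (by omega) (j - 2) 2 le_rfl (by omega)
      simpa using this
    have hCs : C * sigma n 1 = E := by
      have := fall_succ_right n 1 (j - 2)
      rw [show j - 2 + 1 = j - 1 from by omega] at this
      exact this.symm
    have hEF : E = sigma n (j - 1) * F := by
      have := fall_succ_left n 1 (j - 2)
      rw [show j - 2 + 1 = j - 1 from by omega, show 1 + (j - 2) = j - 1 from by omega] at this
      exact this
    have hC' : C = E * (sigma n 1)⁻¹ := by rw [← hCs, mul_inv_cancel_right]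
    have hF' : F = E * C * E⁻¹ := by rw [hEC, mul_inv_cancel_right]
    have hsig : sigma n (j - 1) = E * F⁻¹ := by rw [hEF, mul_inv_cancel_right]
    refine ⟨j - 1, n, by omega, by omega, le_rfl, ?_⟩
    have hb1 : band n 1 j = C * sigma n 1 * C⁻¹ := by
      rw [band_eq, hC0, show (1:ℕ) + 1 = 2 from rfl, show j - 1 - 1 = j - 2 from by omega]
    have hb2 : band n (j - 1) n = D * sigma n (j - 1) * D⁻¹ := by
      rw [band_eq, hD, show j - 1 + 1 = j from by omega,
        show n - 1 - (j - 1) = n - j from by omega]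
    rw [hb1, hb2, hsplit, hsig, hF', hC']
    group
  · -- 2 ≤ i
    have hC : bdelta n * fall n (i + 1) (j - 1 - i) = fall n i (j - 1 - i) * bdelta n := by
      have := delta_mul_fall n (i + 1) (j - 1 - i) (by omega) (by omega)
      simpa using this
    have hs : bdelta n * sigma n i = sigma n (i - 1) * bdelta n :=
      delta_mul_sigma n i h2 (by omega)
    set δ := bdelta n
    set C := fall n (i + 1) (j - 1 - i) with hC0
    set X := fall n i (j - 1 - i) with hX0
    have hC' : C = δ⁻¹ * (X * δ) := by rw [← hC, inv_mul_cancel_left]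
    have hs' : sigma n i = δ⁻¹ * (sigma n (i - 1) * δ) := by rw [← hs, inv_mul_cancel_left]
    refine ⟨i - 1, j - 1, by omega, by omega, by omega, ?_⟩
    have hb1 : band n i j = C * sigma n i * C⁻¹ := by rw [band_eq, hC0]
    have hb2 : band n (i - 1) (j - 1) = X * sigma n (i - 1) * X⁻¹ := by
      rw [band_eq, hX0, show i - 1 + 1 = i from by omega,
        show j - 1 - 1 - (i - 1) = j - 1 - i from by omega]
    rw [hb1, hb2, hC', hs']
    group

lemma sigma_mem (n k : ℕ) (h1 : 1 ≤ k) (h2 : k ≤ n - 1) : sigma n k ∈ SQP n := by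
  have hb : band n k (k + 1) = sigma n k := by
    rw [band_eq, show k + 1 - 1 - k = 0 from by omega, fall_zero]
    group
  exact hb ▸ Submonoid.subset_closure ⟨k, k + 1, h1, by omega, by omega, rfl⟩

lemma fall_mem (n : ℕ) : ∀ b a : ℕ, 1 ≤ a → a + b ≤ n → fall n a b ∈ SQP n := by
  intro b
  induction b with
  | zero => intro a _ _; rw [fall_zero]; exact one_mem _
  | succ b ih =>
    intro a ha hab
    rw [fall_succ_left]
    exact mul_mem (sigma_mem n (a + b) (by omega) (by omega)) (ih a ha (by omega))

lemma conj_mem (n : ℕ) {X : BraidGroup n} (hX : X ∈ SQP n) :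
    bdelta n * X * (bdelta n)⁻¹ ∈ SQP n := by
  induction hX using Submonoid.closure_induction with
  | mem x hx =>
    obtain ⟨i, j, hi, hij, hj, rfl⟩ := hx
    exact Submonoid.subset_closure (delta_conj_band n i j hi hij hj)
  | one => simpa using one_mem (SQP n)
  | mul x y hx hy ihx ihy =>
    have e : bdelta n * (x * y) * (bdelta n)⁻¹
        = (bdelta n * x * (bdelta n)⁻¹) * (bdelta n * y * (bdelta n)⁻¹) := by group
    rw [e]; exact mul_mem ihx ihy

lemma conj_pow_mem (n : ℕ) (k : ℕ) {X : BraidGroup n} (hX : X ∈ SQP n) :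
    (bdelta n) ^ k * X * ((bdelta n) ^ k)⁻¹ ∈ SQP n := by
  induction k with
  | zero => simpa using hX
  | succ k ih =>
    have e : (bdelta n) ^ (k + 1) * X * ((bdelta n) ^ (k + 1))⁻¹
        = bdelta n * ((bdelta n) ^ k * X * ((bdelta n) ^ k)⁻¹) * (bdelta n)⁻¹ := by
      rw [pow_succ']; group
    rw [e]; exact conj_mem n ih

/-- Every band generator divides `δ` on both sides: `a_{ij}⁻¹ = Q δ⁻¹ P`. -/
lemma band_inv_eq (n i j : ℕ) (hi : 1 ≤ i) (hij : i < j) (hj : j ≤ n) :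
    ∃ P ∈ SQP n, ∃ Q ∈ SQP n, (band n i j)⁻¹ = Q * (bdelta n)⁻¹ * P := by
  set X := fall n j (n - j) with hX
  set C := fall n (i + 1) (j - 1 - i) with hC
  set Y := fall n 1 (i - 1) with hY
  have h1 : bdelta n = X * fall n 1 (j - 1) := by
    have h := fall_add n 1 (j - 1) (n - j)
    rw [show 1 + (j - 1) = j from by omega] at h
    have e1 : fall n 1 (n - 1) = fall n 1 (n - j + (j - 1)) :=
      congrArg (fall n 1) (by omega)
    rw [bdelta_eq, e1, h]
  have h2 : fall n 1 (j - 1) = C * fall n 1 i := by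
    have h := fall_add n 1 i (j - 1 - i)
    rw [show 1 + i = i + 1 from by omega] at h
    have e1 : fall n 1 (j - 1) = fall n 1 (j - 1 - i + i) :=
      congrArg (fall n 1) (by omega)
    rw [e1, h]
  have h3 : fall n 1 i = sigma n i * Y := by
    have h := fall_succ_left n 1 (i - 1)
    rw [show 1 + (i - 1) = i from by omega] at h
    have e1 : fall n 1 i = fall n 1 (i - 1 + 1) := congrArg (fall n 1) (by omega)
    rw [e1, h, hY]
  have hδ : bdelta n = X * band n i j * (C * Y) := by
    rw [band_eq, ← hC, h1, h2, h3]
    group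
  refine ⟨X, fall_mem n (n - j) j (by omega) (by omega), C * Y,
    mul_mem (fall_mem n (j - 1 - i) (i + 1) (by omega) (by omega))
      (fall_mem n (i - 1) 1 le_rfl (by omega)), ?_⟩
  rw [hδ]
  group

end StmtAux

namespace StmtAux

/-- Pushing all the `δ⁻¹`'s in a band-generator word to the left. -/
lemma word_prod (n : ℕ) : ∀ W : List (ℕ × ℕ × Bool), IsWord n W →
    ∃ Q ∈ SQP n, (W.map (evalLetter n)).prod = ((bdelta n) ^ (nbWord W))⁻¹ * Q := by
  intro W
  induction W with
  | nil => intro _; exact ⟨1, one_mem _, by simp [nbWord]⟩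
  | cons l T ih =>
    intro hW
    have hl := hW l List.mem_cons_self
    obtain ⟨Q', hQ', hprod⟩ := ih (fun x hx => hW x (List.mem_cons_of_mem l hx))
    set m := nbWord T with hm
    cases hb : l.2.2 with
    | true =>
      have hnb : nbWord (l :: T) = m := by simp [nbWord, List.filter_cons, hb, hm]
      have hband : band n l.1 l.2.1 ∈ SQP n :=
        Submonoid.subset_closure ⟨l.1, l.2.1, hl.1, hl.2.1, hl.2.2, rfl⟩
      have hc := conj_pow_mem n m hband
      refine ⟨((bdelta n) ^ m * band n l.1 l.2.1 * ((bdelta n) ^ m)⁻¹) * Q',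
        mul_mem hc hQ', ?_⟩
      rw [hnb, List.map_cons, List.prod_cons, hprod]
      have he : evalLetter n l = band n l.1 l.2.1 := by simp [evalLetter, hb]
      rw [he]
      group
    | false =>
      have hnb : nbWord (l :: T) = m + 1 := by simp [nbWord, List.filter_cons, hb, hm]
      obtain ⟨P, hP, Q₀, hQ₀, hinv⟩ := band_inv_eq n l.1 l.2.1 hl.1 hl.2.1 hl.2.2
      refine ⟨((bdelta n) ^ (m + 1) * Q₀ * ((bdelta n) ^ (m + 1))⁻¹) *
          (((bdelta n) ^ m * P * ((bdelta n) ^ m)⁻¹) * Q'),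
        mul_mem (conj_pow_mem n (m + 1) hQ₀) (mul_mem (conj_pow_mem n m hP) hQ'), ?_⟩
      rw [hnb, List.map_cons, List.prod_cons, hprod]
      have he : evalLetter n l = (band n l.1 l.2.1)⁻¹ := by simp [evalLetter, hb]
      rw [he, hinv, pow_succ]
      group

lemma flip_prod (n : ℕ) : ∀ W : List (ℕ × ℕ × Bool),
    (((W.reverse.map (fun l : ℕ × ℕ × Bool => (l.1, l.2.1, !l.2.2))).map
      (evalLetter n)).prod) = ((W.map (evalLetter n)).prod)⁻¹ := by
  intro W
  induction W with
  | nil => simp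
  | cons l T ih =>
    have he : evalLetter n (l.1, l.2.1, !l.2.2) = (evalLetter n l)⁻¹ := by
      cases hb : l.2.2 <;> simp [evalLetter, hb]
    simp only [List.reverse_cons, List.map_append, List.prod_append, List.map_cons,
      List.prod_cons, List.map_nil, List.prod_nil, mul_one, ih, he, mul_inv_rev]

lemma exists_rep (n : ℕ) (β : BraidGroup n) : ∃ W, Represents n W β := by
  induction β using PresentedGroup.induction_on with
  | _ z =>
    induction z using FreeGroup.induction_on with
    | C1 => exact ⟨[], fun l hl => absurd hl List.not_mem_nil, by simp⟩
    | of x =>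
      refine ⟨[((x : ℕ) + 1, (x : ℕ) + 2, true)], ?_, ?_⟩
      · rintro l hl
        rcases List.mem_singleton.mp hl with rfl
        have := x.isLt
        refine ⟨?_, ?_, ?_⟩ <;> simp <;> omega
      · have hx : (x : ℕ) + 1 - 1 < n - 1 := by simp
        have hband : band n ((x : ℕ) + 1) ((x : ℕ) + 2) = sigma n ((x : ℕ) + 1) := by
          rw [band_eq, show (x : ℕ) + 2 - 1 - ((x : ℕ) + 1) = 0 from by omega, fall_zero]
          group
        have hsig : sigma n ((x : ℕ) + 1) = PresentedGroup.mk (braidRels n) (FreeGroup.of x) := by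
          unfold sigma
          rw [dif_pos hx]
          congr 1
        simp only [List.map_cons, List.map_nil, List.prod_cons, List.prod_nil, mul_one]
        rw [show evalLetter n ((x : ℕ) + 1, (x : ℕ) + 2, true) = band n ((x : ℕ) + 1) ((x : ℕ) + 2)
          from rfl, hband, hsig]
    | inv_of x ihx =>
      obtain ⟨W, hWw, hWp⟩ := ihx
      refine ⟨W.reverse.map (fun l => (l.1, l.2.1, !l.2.2)), ?_, ?_⟩
      · intro l hl
        obtain ⟨a, ha, rfl⟩ := List.mem_map.mp hl
        exact hWw a (List.mem_reverse.mp ha)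
      · rw [flip_prod, hWp, map_inv]
    | mul x y ihx ihy =>
      obtain ⟨Wx, hWxw, hWxp⟩ := ihx
      obtain ⟨Wy, hWyw, hWyp⟩ := ihy
      refine ⟨Wx ++ Wy, ?_, ?_⟩
      · intro l hl
        rcases List.mem_append.mp hl with h | h
        · exact hWxw l h
        · exact hWyw l h
      · rw [List.map_append, List.prod_append, hWxp, hWyp, map_mul]

end StmtAux

/-- if `n ≥ 3` and `inf(β) ≤ -1` then `0 < -inf(β) ≤ nb(β)`. -/
theorem statement_8 (n : ℕ) (hn : 3 ≤ n) (β : BraidGroup n) (h : binf n β ≤ -1) :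
    0 < -binf n β ∧ -binf n β ≤ (nb n β : ℤ) := by
  set S := { r : ℤ | bble n (bdelta n ^ r) β } with hS
  have hbinf : binf n β = sSup S := rfl
  have hSne_bdd : S.Nonempty ∧ BddAbove S := by
    by_contra hc
    have h0 : sSup S = 0 := by
      rcases not_and_or.mp hc with h1 | h2
      · rw [Set.not_nonempty_iff_eq_empty.mp h1, Int.csSup_empty]
      · rw [csSup_of_not_bddAbove h2, Int.csSup_empty]
    rw [hbinf, h0] at h
    norm_num at h
  obtain ⟨hne, hbdd⟩ := hSne_bdd
  have hTne : { m : ℕ | ∃ W, Represents n W β ∧ nbWord W = m }.Nonempty := by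
    obtain ⟨W, hW⟩ := StmtAux.exists_rep n β
    exact ⟨nbWord W, W, hW, rfl⟩
  obtain ⟨W, hWrep, hWnb⟩ := Nat.sInf_mem hTne
  have hWnb' : nbWord W = nb n β := hWnb
  obtain ⟨Q, hQ, hprod⟩ := StmtAux.word_prod n W hWrep.1
  have hmemS : (-(nb n β : ℤ)) ∈ S := by
    refine ⟨1, one_mem _, Q, hQ, ?_⟩
    rw [one_mul, zpow_neg, zpow_natCast, ← hWnb', ← hprod]
    exact hWrep.2.symm
  have hle : (-(nb n β : ℤ)) ≤ binf n β := by
    rw [hbinf]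
    exact le_csSup hbdd hmemS
  constructor
  · linarith
  · linarith
end

section
/- Let n ≥ 3 and β ∈ B_n with inf(β) ≤ −1. (i) If inf(β) < 0 < sup(β), then nb(β) ≤ (n−2)·|inf(β)|. (ii) If inf(β) < sup(β) ≤ 0, then nb(β) = −writhe(β) ≤ (n−2)·|inf(β)| + |sup(β)|. -/
namespace Braid
variable {n : ℕ}

lemma rel_one {r : FreeGroup (Fin (n-1))} (h : r ∈ braidRels n) :
    PresentedGroup.mk (braidRels n) r = 1 := by
  have : r ∈ Subgroup.normalClosure (braidRels n) := Subgroup.subset_normalClosure h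
  exact (QuotientGroup.eq_one_iff r).2 this

lemma of_comm {i j : Fin (n-1)} (h : (i:ℕ) + 1 < (j:ℕ)) :
    (PresentedGroup.of i : BraidGroup n) * PresentedGroup.of j =
      PresentedGroup.of j * PresentedGroup.of i := by
  have := rel_one (n := n) (Or.inl ⟨i, j, h, rfl⟩)
  simp only [map_mul, map_inv] at this
  have h2 : ∀ x : Fin (n-1), PresentedGroup.mk (braidRels n) (FreeGroup.of x) =
      (PresentedGroup.of x : BraidGroup n) := fun _ => rfl
  rw [h2, h2] at this
  have h3 : (PresentedGroup.of i : BraidGroup n) * PresentedGroup.of j *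
      (PresentedGroup.of i)⁻¹ * (PresentedGroup.of j)⁻¹ = 1 := this
  calc (PresentedGroup.of i : BraidGroup n) * PresentedGroup.of j
      = ((PresentedGroup.of i : BraidGroup n) * PresentedGroup.of j *
        (PresentedGroup.of i)⁻¹ * (PresentedGroup.of j)⁻¹) *
        (PresentedGroup.of j * PresentedGroup.of i) := by group
    _ = PresentedGroup.of j * PresentedGroup.of i := by rw [h3]; group

end Braid

namespace Braid
variable {n : ℕ}

lemma of_braid {i j : Fin (n-1)} (h : (i:ℕ) + 1 = (j:ℕ)) :
    (PresentedGroup.of i : BraidGroup n) * PresentedGroup.of j * PresentedGroup.of i =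
      PresentedGroup.of j * PresentedGroup.of i * PresentedGroup.of j := by
  have := rel_one (n := n) (Or.inr ⟨i, j, h, rfl⟩)
  simp only [map_mul, map_inv] at this
  have h2 : ∀ x : Fin (n-1), PresentedGroup.mk (braidRels n) (FreeGroup.of x) =
      (PresentedGroup.of x : BraidGroup n) := fun _ => rfl
  rw [h2, h2] at this
  have h3 : (PresentedGroup.of i : BraidGroup n) * PresentedGroup.of j * PresentedGroup.of i *
      (PresentedGroup.of j * PresentedGroup.of i * PresentedGroup.of j)⁻¹ = 1 := this
  calc (PresentedGroup.of i : BraidGroup n) * PresentedGroup.of j * PresentedGroup.of i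
      = ((PresentedGroup.of i : BraidGroup n) * PresentedGroup.of j * PresentedGroup.of i *
        (PresentedGroup.of j * PresentedGroup.of i * PresentedGroup.of j)⁻¹) *
        (PresentedGroup.of j * PresentedGroup.of i * PresentedGroup.of j) := by group
    _ = _ := by rw [h3]; group

lemma sigma_eq_of {k : ℕ} (h1 : 1 ≤ k) (h2 : k ≤ n - 1) :
    sigma n k = PresentedGroup.of (⟨k - 1, by omega⟩ : Fin (n-1)) := by
  rw [sigma, dif_pos]

lemma sigma_comm {k l : ℕ} (h1 : 1 ≤ k) (h : k + 2 ≤ l) (h2 : l ≤ n - 1) :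
    sigma n k * sigma n l = sigma n l * sigma n k := by
  rw [sigma_eq_of h1 (by omega), sigma_eq_of (by omega) h2]
  exact of_comm (by simp; omega)

lemma sigma_braid {k : ℕ} (h1 : 1 ≤ k) (h2 : k + 1 ≤ n - 1) :
    sigma n k * sigma n (k+1) * sigma n k = sigma n (k+1) * sigma n k * sigma n (k+1) := by
  rw [sigma_eq_of h1 (by omega), sigma_eq_of (by omega) h2]
  exact of_braid (by simp; omega)

end Braid

noncomputable def des (n a b : ℕ) : BraidGroup n :=
  ((List.range' a b).reverse.map (sigma n)).prod

namespace Braid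
variable {n : ℕ}

@[simp] lemma des_zero {a : ℕ} : des n a 0 = 1 := rfl

lemma des_succ {a b : ℕ} : des n a (b+1) = sigma n (a+b) * des n a b := by
  rw [des, des, List.range'_concat]
  simp

lemma des_succ' {a b : ℕ} : des n a (b+1) = des n (a+1) b * sigma n a := by
  rw [des, des, List.range'_succ]
  simp

lemma des_one {a : ℕ} : des n a 1 = sigma n a := by
  rw [show (1:ℕ) = 0 + 1 from rfl, des_succ]; simp

lemma des_split {a b c : ℕ} : des n a (b+c) = des n (a+b) c * des n a b := by
  rw [des, des, des,
    ← List.range'_append_1 (s := a) (m := b) (n := c)]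
  rw [List.reverse_append, List.map_append, List.prod_append]

lemma sigma_des_comm_low {m a b : ℕ} (ha : 1 ≤ a) (h : a + b + 1 ≤ m) (hm : m ≤ n - 1) :
    sigma n m * des n a b = des n a b * sigma n m := by
  induction b with
  | zero => simp
  | succ b ih =>
      rw [des_succ, ← mul_assoc, ← sigma_comm (by omega) (by omega) hm, mul_assoc,
        ih (by omega), mul_assoc]

lemma sigma_des_comm_hi {m a b : ℕ} (hm : 1 ≤ m) (h : m + 2 ≤ a) (hb : a + b ≤ n) :
    sigma n m * des n a b = des n a b * sigma n m := by
  induction b with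
  | zero => simp
  | succ b ih =>
      rw [des_succ, ← mul_assoc, sigma_comm hm (by omega) (by omega), mul_assoc,
        ih (by omega), mul_assoc]

lemma des_des_comm {a b c d : ℕ} (ha : 1 ≤ a) (h : a + b + 1 ≤ c) (hd : c + d ≤ n) :
    des n c d * des n a b = des n a b * des n c d := by
  induction d with
  | zero => simp
  | succ d ih =>
      rw [des_succ, mul_assoc, ih (by omega), ← mul_assoc,
        sigma_des_comm_low ha (by omega) (by omega), mul_assoc]

end Braid

namespace Braid
variable {n : ℕ}

section helpers
variable {G : Type*} [Group G] {a b c d : G}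

lemma ext_mul {x y : G} (h : ∀ t, x * t = y * t) : x = y := by simpa using h 1

lemma push (h : a * b = c * d) : ∀ t : G, a * (b * t) = c * (d * t) := by
  intro t; rw [← mul_assoc, h, mul_assoc]

lemma cml (h : a * b = b * a) : ∀ t : G, a * (b * t) = b * (a * t) := push h

lemma swap_inv (h : a * b = b * a) : a * b⁻¹ = b⁻¹ * a := (Commute.inv_right h).eq

lemma cml_ir (h : a * b = b * a) : ∀ t : G, a * (b⁻¹ * t) = b⁻¹ * (a * t) :=
  cml (swap_inv h)

lemma cml_il (h : a * b = b * a) : ∀ t : G, a⁻¹ * (b * t) = b * (a⁻¹ * t) :=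
  cml (Commute.inv_left h).eq

lemma brd (h : a * b * a = b * a * b) : ∀ t : G, a * (b * (a * t)) = b * (a * (b * t)) := by
  intro t; rw [← mul_assoc, ← mul_assoc, h, mul_assoc, mul_assoc]

lemma brd_il (h : a * b * a = b * a * b) : ∀ t : G, a⁻¹ * (b * (a * t)) = b * (a * (b⁻¹ * t)) := by
  have key : a⁻¹ * b * a = b * a * b⁻¹ := by
    calc a⁻¹ * b * a = a⁻¹ * (b * a * b) * b⁻¹ := by group
      _ = a⁻¹ * (a * b * a) * b⁻¹ := by rw [h]
      _ = b * a * b⁻¹ := by group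
  intro t; rw [← mul_assoc, ← mul_assoc, key, mul_assoc, mul_assoc]

lemma brd_ir (h : a * b * a = b * a * b) : ∀ t : G, a * (b * (a⁻¹ * t)) = b⁻¹ * (a * (b * t)) := by
  have key : a * b * a⁻¹ = b⁻¹ * a * b := by
    calc a * b * a⁻¹ = b⁻¹ * (b * a * b) * b⁻¹ * (b * a⁻¹) := by group
      _ = b⁻¹ * (a * b * a) * b⁻¹ * (b * a⁻¹) := by rw [h]
      _ = b⁻¹ * a * b := by group
  intro t; rw [← mul_assoc, ← mul_assoc, key, mul_assoc, mul_assoc]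

end helpers

lemma band_def {i j : ℕ} :
    band n i j = des n (i+1) (j-1-i) * sigma n i * (des n (i+1) (j-1-i))⁻¹ := rfl

lemma bdelta_def : bdelta n = des n 1 (n-1) := rfl

lemma band_adj {k : ℕ} : band n k (k+1) = sigma n k := by
  rw [band_def]
  simp [show k+1-1-k = 0 from by omega]

lemma band_succ {i j : ℕ} (hij : i < j) :
    band n i (j+1) = sigma n j * band n i j * (sigma n j)⁻¹ := by
  have h1 : j + 1 - 1 - i = (j - 1 - i) + 1 := by omega
  have h2 : (i+1) + (j-1-i) = j := by omega
  rw [band_def, band_def, h1, des_succ, h2]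
  group

lemma band_shift {i j : ℕ} (h1 : 1 ≤ i) (h2 : i + 2 ≤ j) (h3 : j ≤ n) :
    sigma n i * band n i j * (sigma n i)⁻¹ = band n (i+1) j := by
  have hsplit : des n (i+1) (j-1-i) = des n (i+2) (j-2-i) * sigma n (i+1) := by
    have := des_succ' (n := n) (a := i+1) (b := j-2-i)
    rw [show (j-2-i)+1 = j-1-i from by omega] at this
    rw [this, show i+1+1 = i+2 from rfl]
  have hcE : sigma n i * des n (i+2) (j-2-i) = des n (i+2) (j-2-i) * sigma n i :=
    sigma_des_comm_hi h1 (by omega) (by omega)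
  have hB : sigma n i * sigma n (i+1) * sigma n i
      = sigma n (i+1) * sigma n i * sigma n (i+1) := sigma_braid h1 (by omega)
  have hb2 : band n (i+1) j
      = des n (i+2) (j-2-i) * sigma n (i+1) * (des n (i+2) (j-2-i))⁻¹ := by
    rw [band_def, show j - 1 - (i+1) = j-2-i from by omega, show i+1+1 = i+2 from rfl]
  rw [band_def, hsplit, hb2]
  apply ext_mul; intro t
  simp only [mul_assoc, mul_inv_rev]
  rw [cml hcE, brd hB]
  simp only [inv_mul_cancel_left, mul_inv_cancel_left]
  rw [cml_ir hcE]
  simp only [inv_mul_cancel_left, mul_inv_cancel_left]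

lemma des_conj_sigma {a b : ℕ} (ha : 1 ≤ a) (hb : a + b + 1 ≤ n) :
    (des n a b)⁻¹ * sigma n (a+b) * des n a b = band n a (a+b+1) := by
  induction b with
  | zero => simp [band_adj]
  | succ b ih =>
      have hB : sigma n (a+b) * sigma n (a+b+1) * sigma n (a+b)
          = sigma n (a+b+1) * sigma n (a+b) * sigma n (a+b+1) :=
        sigma_braid (by omega) (by omega)
      have hc : sigma n (a+b+1) * des n a b = des n a b * sigma n (a+b+1) :=
        sigma_des_comm_low ha (by omega) (by omega)
      rw [show a + (b+1) = (a+b)+1 from by omega, des_succ,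
        band_succ (show a < a + b + 1 from by omega), ← ih (by omega)]
      apply ext_mul; intro t
      simp only [mul_assoc, mul_inv_rev]
      rw [brd_il hB, cml_il hc.symm, ← cml_ir hc.symm]

lemma delta_sigma {k : ℕ} (h1 : 1 ≤ k) (h2 : k ≤ n - 2) :
    bdelta n * sigma n (k+1) = sigma n k * bdelta n := by
  have e1 : des n 1 (n-1) = des n (k+2) (n-2-k) * des n 1 (k+1) := by
    have := des_split (n := n) (a := 1) (b := k+1) (c := n-2-k)
    rw [show (k+1)+(n-2-k) = n-1 from by omega, show 1+(k+1) = k+2 from by omega] at this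
    exact this
  have e2 : des n 1 (k+1) = sigma n (k+1) * des n 1 k := by
    have := des_succ (n := n) (a := 1) (b := k)
    rw [show 1+k = k+1 from by omega] at this
    exact this
  have e3 : des n 1 k = sigma n k * des n 1 (k-1) := by
    have := des_succ (n := n) (a := 1) (b := k-1)
    rw [show (k-1)+1 = k from by omega, show 1+(k-1) = k from by omega] at this
    exact this
  have hδ : bdelta n = des n (k+2) (n-2-k) * (sigma n (k+1) * (sigma n k * des n 1 (k-1))) := by
    rw [bdelta_def, e1, e2, e3]
  have hc1 : sigma n (k+1) * des n 1 (k-1) = des n 1 (k-1) * sigma n (k+1) :=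
    sigma_des_comm_low (by omega) (by omega) (by omega)
  have hc2 : sigma n k * des n (k+2) (n-2-k) = des n (k+2) (n-2-k) * sigma n k :=
    sigma_des_comm_hi h1 (by omega) (by omega)
  have hB : sigma n k * sigma n (k+1) * sigma n k
      = sigma n (k+1) * sigma n k * sigma n (k+1) := sigma_braid h1 (by omega)
  rw [hδ]
  apply ext_mul; intro t
  simp only [mul_assoc]
  rw [← cml hc1, ← brd hB, cml hc2]

lemma delta_des {a b : ℕ} (ha : 2 ≤ a) (hb : a + b ≤ n) :
    bdelta n * des n a b = des n (a-1) b * bdelta n := by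
  induction b with
  | zero => simp
  | succ b ih =>
      have e : sigma n (a-1+b) = sigma n (a+b-1) := by rw [show a-1+b = a+b-1 from by omega]
      rw [des_succ, des_succ, e]
      have hds := delta_sigma (n := n) (k := a + b - 1) (by omega) (by omega)
      rw [show (a+b-1)+1 = a+b from by omega] at hds
      apply ext_mul; intro t
      simp only [mul_assoc]
      rw [push hds, push (ih (by omega))]

lemma band_one_n (hn : 2 ≤ n) : band n 1 n = bdelta n * sigma n 1 * (bdelta n)⁻¹ := by
  have hδ : bdelta n = des n 2 (n-2) * sigma n 1 := by
    have := des_succ' (n := n) (a := 1) (b := n-2)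
    rw [show (n-2)+1 = n-1 from by omega] at this
    rw [bdelta_def, this, show (1:ℕ)+1 = 2 from rfl]
  rw [band_def, show n - 1 - 1 = n - 2 from by omega, hδ, show (1:ℕ)+1 = 2 from rfl]
  group

end Braid

namespace Braid
variable {n : ℕ}

lemma G' (d : ℕ) (hn : 2 ≤ n) (hd : d ≤ n-2) :
    des n (n-1-d) (d+1) * band n (n-1-d) n = sigma n (n-1) * des n (n-1-d) (d+1) := by
  induction d with
  | zero =>
      have h1 : band n (n-1) n = sigma n (n-1) := by
        have : band n (n-1) ((n-1)+1) = sigma n (n-1) := band_adj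
        rwa [show (n-1)+1 = n from by omega] at this
      rw [show n-1-0 = n-1 from rfl, des_one, h1]
  | succ d ih =>
      set i := n-2-d with hi
      have h1 : (1:ℕ) ≤ i := by omega
      have hdes : des n i (d+2) = des n (i+1) (d+1) * sigma n i := by
        have := des_succ' (n := n) (a := i) (b := d+1)
        rwa [show (d+1)+1 = d+2 from rfl] at this
      have hsh := band_shift (n := n) (i := i) (j := n) h1 (by omega) le_rfl
      have ih' : des n (i+1) (d+1) * band n (i+1) n = sigma n (n-1) * des n (i+1) (d+1) := by
        have := ih (by omega)
        rwa [show n-1-d = i+1 from by omega] at this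
      rw [show n-1-(d+1) = i from by omega, show d+1+1 = d+2 from rfl, hdes]
      calc des n (i+1) (d+1) * sigma n i * band n i n
          = des n (i+1) (d+1) * (sigma n i * band n i n * (sigma n i)⁻¹) * sigma n i := by
            group
        _ = des n (i+1) (d+1) * band n (i+1) n * sigma n i := by rw [hsh]
        _ = sigma n (n-1) * des n (i+1) (d+1) * sigma n i := by rw [ih']
        _ = sigma n (n-1) * (des n (i+1) (d+1) * sigma n i) := by group

lemma delta_band_one (hn : 2 ≤ n) :
    bdelta n * band n 1 n = sigma n (n-1) * bdelta n := by
  have := G' (n := n) (n-2) hn le_rfl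
  rwa [show n-1-(n-2) = 1 from by omega, show (n-2)+1 = n-1 from by omega, ← bdelta_def] at this

lemma conj_of_comm {G : Type*} [Group G] {x y δ : G} (h : δ * y = x * δ) :
    δ⁻¹ * x * δ = y := by
  calc δ⁻¹ * x * δ = δ⁻¹ * (x * δ) := by group
    _ = δ⁻¹ * (δ * y) := by rw [← h]
    _ = y := by group

lemma tau_sigma {k : ℕ} (h1 : 1 ≤ k) (h2 : k ≤ n - 2) :
    (bdelta n)⁻¹ * sigma n k * bdelta n = sigma n (k+1) :=
  conj_of_comm (delta_sigma h1 h2)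

lemma tau_sigma_top (hn : 2 ≤ n) :
    (bdelta n)⁻¹ * sigma n (n-1) * bdelta n = band n 1 n :=
  conj_of_comm (delta_band_one hn)

lemma tau_des {a b : ℕ} (ha : 1 ≤ a) (hb : a + b ≤ n - 1) :
    (bdelta n)⁻¹ * des n a b * bdelta n = des n (a+1) b := by
  have := delta_des (n := n) (a := a+1) (b := b) (by omega) (by omega)
  rw [show a+1-1 = a from by omega] at this
  exact conj_of_comm this

lemma tau_band_lt {i j : ℕ} (h1 : 1 ≤ i) (h2 : i < j) (h3 : j ≤ n-1) :
    (bdelta n)⁻¹ * band n i j * bdelta n = band n (i+1) (j+1) := by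
  have hC := tau_des (n := n) (a := i+1) (b := j-1-i) (by omega) (by omega)
  have hs := tau_sigma (n := n) h1 (by omega)
  have hb2 : band n (i+1) (j+1)
      = des n (i+2) (j-1-i) * sigma n (i+1) * (des n (i+2) (j-1-i))⁻¹ := by
    rw [band_def, show (j+1)-1-(i+1) = j-1-i from by omega, show i+1+1 = i+2 from rfl]
  rw [band_def, hb2, ← hC, ← hs]
  group

lemma tau_band_top' (d : ℕ) (hn : 2 ≤ n) (hd : d ≤ n-2) :
    (bdelta n)⁻¹ * band n (n-1-d) n * bdelta n = band n 1 (n-d) := by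
  induction d with
  | zero =>
      have h1 : band n (n-1) n = sigma n (n-1) := by
        have : band n (n-1) ((n-1)+1) = sigma n (n-1) := band_adj
        rwa [show (n-1)+1 = n from by omega] at this
      rw [show n-1-0 = n-1 from rfl, show n-0 = n from rfl, h1]
      exact tau_sigma_top hn
  | succ d ih =>
      set i := n-2-d with hi
      have h1 : (1:ℕ) ≤ i := by omega
      have hsh := band_shift (n := n) (i := i) (j := n) h1 (by omega) le_rfl
      have ih' : (bdelta n)⁻¹ * band n (i+1) n * bdelta n = band n 1 (i+2) := by
        have := ih (by omega)
        rwa [show n-1-d = i+1 from by omega, show n-d = i+2 from by omega] at this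
      have hs := tau_sigma (n := n) h1 (by omega)
      have hrec : band n 1 (i+2) = sigma n (i+1) * band n 1 (i+1) * (sigma n (i+1))⁻¹ :=
        band_succ (by omega)
      rw [show n-1-(d+1) = i from by omega, show n-(d+1) = i+1 from by omega]
      have hb : band n i n = (sigma n i)⁻¹ * band n (i+1) n * sigma n i := by
        rw [← hsh]; group
      calc (bdelta n)⁻¹ * band n i n * bdelta n
          = ((bdelta n)⁻¹ * sigma n i * bdelta n)⁻¹ *
              ((bdelta n)⁻¹ * band n (i+1) n * bdelta n) *
              ((bdelta n)⁻¹ * sigma n i * bdelta n) := by rw [hb]; group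
        _ = (sigma n (i+1))⁻¹ * band n 1 (i+2) * sigma n (i+1) := by rw [ih', hs]
        _ = band n 1 (i+1) := by rw [hrec]; group

lemma tau_band_mem (hn : 2 ≤ n) {b : BraidGroup n} (hb : b ∈ Bands n) :
    (bdelta n)⁻¹ * b * bdelta n ∈ Bands n := by
  obtain ⟨i, j, h1, h2, h3, rfl⟩ := hb
  rcases Nat.lt_or_ge j n with hj | hj
  · exact ⟨i+1, j+1, by omega, by omega, by omega, by rw [tau_band_lt h1 h2 (by omega)]⟩
  · have hjn : j = n := by omega
    rw [hjn]
    refine ⟨1, i+1, le_rfl, by omega, by omega, ?_⟩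
    have := tau_band_top' (n := n) (n-1-i) hn (by omega)
    rwa [show n-1-(n-1-i) = i from by omega, show n-(n-1-i) = i+1 from by omega] at this

lemma tauInv_band_mem (hn : 2 ≤ n) {b : BraidGroup n} (hb : b ∈ Bands n) :
    bdelta n * b * (bdelta n)⁻¹ ∈ Bands n := by
  obtain ⟨i, j, h1, h2, h3, rfl⟩ := hb
  rcases Nat.lt_or_ge i 2 with hi | hi
  · have hi1 : i = 1 := by omega
    subst hi1
    refine ⟨j-1, n, by omega, by omega, le_rfl, ?_⟩
    have := tau_band_top' (n := n) (n-j) hn (by omega)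
    rw [show n-1-(n-j) = j-1 from by omega, show n-(n-j) = j from by omega] at this
    rw [← this]; group
  · refine ⟨i-1, j-1, by omega, by omega, by omega, ?_⟩
    have := tau_band_lt (n := n) (i := i-1) (j := j-1) (by omega) (by omega) (by omega)
    rw [show i-1+1 = i from by omega, show j-1+1 = j from by omega] at this
    rw [← this]; group

end Braid

namespace Braid
variable {n : ℕ}

/-- descending run of Artin letters as a band word -/
def sword (a b : ℕ) : List (ℕ × ℕ × Bool) :=
  ((List.range' a b).reverse.map (fun k => (k, k+1, true)))

@[simp] lemma sword_zero {a : ℕ} : sword a 0 = [] := rfl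

lemma sword_succ {a b : ℕ} : sword a (b+1) = (a+b, a+b+1, true) :: sword a b := by
  rw [sword, sword, List.range'_concat]
  simp

@[simp] lemma sword_length {a b : ℕ} : (sword a b).length = b := by
  simp [sword]

lemma sword_mem {a b : ℕ} {l : ℕ × ℕ × Bool} (h : l ∈ sword a b) :
    ∃ k, a ≤ k ∧ k < a + b ∧ l = (k, k+1, true) := by
  rw [sword] at h
  simp only [List.mem_map, List.mem_reverse, List.mem_range'_1] at h
  obtain ⟨k, hk, rfl⟩ := h
  exact ⟨k, hk.1, hk.2, rfl⟩

lemma sword_isWord {a b : ℕ} (ha : 1 ≤ a) (hb : a + b ≤ n) : IsWord n (sword a b) := by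
  intro l hl
  obtain ⟨k, h1, h2, rfl⟩ := sword_mem hl
  show 1 ≤ k ∧ k < k + 1 ∧ k + 1 ≤ n
  omega

lemma sword_pos {a b : ℕ} : ∀ l ∈ sword a b, l.2.2 = true := by
  intro l hl
  obtain ⟨k, _, _, rfl⟩ := sword_mem hl
  rfl

lemma sword_eval {a b : ℕ} : ((sword a b).map (evalLetter n)).prod = des n a b := by
  induction b with
  | zero => rfl
  | succ b ih =>
      rw [sword_succ, des_succ, List.map_cons, List.prod_cons, ih]
      congr 1
      show band n (a+b) (a+b+1) = sigma n (a+b)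
      exact band_adj

lemma band_inv_delta_top {i : ℕ} (h1 : 1 ≤ i) (h2 : i < n) :
    (band n i n)⁻¹ * bdelta n = des n (i+1) (n-1-i) * des n 1 (i-1) := by
  have hδ : bdelta n = des n (i+1) (n-1-i) * (sigma n i * des n 1 (i-1)) := by
    have e1 := des_split (n := n) (a := 1) (b := i) (c := n-1-i)
    rw [show i + (n-1-i) = n-1 from by omega, show 1+i = i+1 from by omega] at e1
    have e2 := des_succ (n := n) (a := 1) (b := i-1)
    rw [show (i-1)+1 = i from by omega, show 1+(i-1) = i from by omega] at e2
    rw [bdelta_def, e1, e2]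
  rw [band_def, show n-1-i = n-1-i from rfl, hδ]
  group

lemma band_inv_delta_lt {i j : ℕ} (h1 : 1 ≤ i) (h2 : i < j) (h3 : j < n) :
    (band n i j)⁻¹ * bdelta n
      = des n (j+1) (n-1-j) * (des n (i+1) (j-1-i) *
          (band n i (j+1) * des n 1 (i-1))) := by
  set H := des n (j+1) (n-1-j) with hH
  set C := des n (i+1) (j-1-i) with hC
  have hδ : bdelta n = H * (sigma n j * (C * (sigma n i * des n 1 (i-1)))) := by
    have e1 := des_split (n := n) (a := 1) (b := j-1) (c := n-j)
    rw [show (j-1) + (n-j) = n-1 from by omega, show 1+(j-1) = j from by omega] at e1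
    have e2 := des_succ' (n := n) (a := j) (b := n-1-j)
    rw [show (n-1-j)+1 = n-j from by omega] at e2
    have e3 := des_split (n := n) (a := 1) (b := i) (c := j-1-i)
    rw [show i + (j-1-i) = j-1 from by omega, show 1+i = i+1 from by omega] at e3
    have e4 := des_succ (n := n) (a := 1) (b := i-1)
    rw [show (i-1)+1 = i from by omega, show 1+(i-1) = i from by omega] at e4
    rw [bdelta_def, e1, e2, e3, e4, show j+1 = j+1 from rfl]
    simp only [mul_assoc, hH, hC]
  have hL1 : C⁻¹ * sigma n j * C = band n (i+1) (j+1) := by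
    have := des_conj_sigma (n := n) (a := i+1) (b := j-1-i) (by omega) (by omega)
    rwa [show (i+1) + (j-1-i) = j from by omega,
      show j + 1 = j+1 from rfl] at this
  have hσH : sigma n i * H = H * sigma n i :=
    sigma_des_comm_hi h1 (by omega) (by omega)
  have hCH : C * H = H * C :=
    (des_des_comm (by omega) (by omega) (by omega)).symm
  have hshift : (sigma n i)⁻¹ * band n (i+1) (j+1) * sigma n i = band n i (j+1) := by
    rw [← band_shift (n := n) (i := i) (j := j+1) h1 (by omega) (by omega)]
    group
  have key : ∀ t, (sigma n i)⁻¹ * (C⁻¹ * (sigma n j * (C * (sigma n i * t))))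
      = band n i (j+1) * t := by
    intro t
    have e : ((sigma n i)⁻¹ * (C⁻¹ * sigma n j * C) * sigma n i) * t
        = band n i (j+1) * t := by rw [hL1, hshift]
    calc (sigma n i)⁻¹ * (C⁻¹ * (sigma n j * (C * (sigma n i * t))))
        = ((sigma n i)⁻¹ * (C⁻¹ * sigma n j * C) * sigma n i) * t := by group
      _ = band n i (j+1) * t := e
  rw [band_def, hδ]
  apply ext_mul; intro t
  simp only [mul_assoc, mul_inv_rev, inv_inv]
  rw [cml_il hCH, cml_il hσH, ← cml hCH]
  rw [key]

end Braid

namespace Braid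
variable {n : ℕ}

lemma band_mem_bands {i j : ℕ} (h1 : 1 ≤ i) (h2 : i < j) (h3 : j ≤ n) :
    band n i j ∈ Bands n := ⟨i, j, h1, h2, h3, rfl⟩

lemma evalLetter_pos {i j : ℕ} : evalLetter n (i, j, true) = band n i j := rfl

lemma evalLetter_neg {i j : ℕ} : evalLetter n (i, j, false) = (band n i j)⁻¹ := rfl

lemma isWord_append {W1 W2 : List (ℕ × ℕ × Bool)} (h1 : IsWord n W1) (h2 : IsWord n W2) :
    IsWord n (W1 ++ W2) := by
  intro l hl
  rcases List.mem_append.1 hl with h | h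
  exacts [h1 l h, h2 l h]

lemma eval_append (W1 W2 : List (ℕ × ℕ × Bool)) :
    ((W1 ++ W2).map (evalLetter n)).prod
      = (W1.map (evalLetter n)).prod * (W2.map (evalLetter n)).prod := by
  rw [List.map_append, List.prod_append]

lemma left_div {i j : ℕ} (h1 : 1 ≤ i) (h2 : i < j) (h3 : j ≤ n) :
    ∃ Z : List (ℕ × ℕ × Bool), IsWord n Z ∧ (∀ l ∈ Z, l.2.2 = true) ∧ Z.length = n - 2 ∧
      (band n i j)⁻¹ * bdelta n = (Z.map (evalLetter n)).prod := by
  rcases Nat.lt_or_ge j n with hj | hj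
  · refine ⟨sword (j+1) (n-1-j) ++ (sword (i+1) (j-1-i) ++ ([(i, j+1, true)] ++ sword 1 (i-1))),
      ?_, ?_, ?_, ?_⟩
    · refine isWord_append (sword_isWord (by omega) (by omega))
        (isWord_append (sword_isWord (by omega) (by omega))
          (isWord_append ?_ (sword_isWord (by omega) (by omega))))
      intro l hl
      simp only [List.mem_singleton] at hl
      subst hl
      show 1 ≤ i ∧ i < j + 1 ∧ j + 1 ≤ n
      omega
    · intro l hl
      simp only [List.mem_append, List.mem_singleton] at hl
      rcases hl with h | h | h | h
      · exact sword_pos l h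
      · exact sword_pos l h
      · subst h; rfl
      · exact sword_pos l h
    · simp only [List.length_append, sword_length, List.length_singleton]
      omega
    · rw [eval_append, eval_append, eval_append, sword_eval, sword_eval, sword_eval,
        List.map_singleton, List.prod_singleton, evalLetter_pos,
        band_inv_delta_lt h1 h2 hj]
  · have hjn : j = n := by omega
    rw [hjn]
    refine ⟨sword (i+1) (n-1-i) ++ sword 1 (i-1),
      isWord_append (sword_isWord (by omega) (by omega)) (sword_isWord (by omega) (by omega)),
      ?_, ?_, ?_⟩
    · intro l hl
      rcases List.mem_append.1 hl with h | h
      exacts [sword_pos l h, sword_pos l h]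
    · simp only [List.length_append, sword_length]; omega
    · rw [eval_append, sword_eval, sword_eval, band_inv_delta_top h1 (by omega)]

lemma right_div (hn : 2 ≤ n) {i j : ℕ} (h1 : 1 ≤ i) (h2 : i < j) (h3 : j ≤ n) :
    ∃ Z : List (ℕ × ℕ × Bool), IsWord n Z ∧ (∀ l ∈ Z, l.2.2 = true) ∧ Z.length = n - 2 ∧
      bdelta n * (band n i j)⁻¹ = (Z.map (evalLetter n)).prod := by
  obtain ⟨i', j', g1, g2, g3, hb⟩ := tauInv_band_mem hn (band_mem_bands h1 h2 h3)
  obtain ⟨Z, hw, hp, hl, he⟩ := left_div g1 g2 g3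
  refine ⟨Z, hw, hp, hl, ?_⟩
  rw [← he, ← hb]
  group

end Braid

namespace Braid
variable {n : ℕ}

lemma mem_SQP_of_bands {b : BraidGroup n} (h : b ∈ Bands n) : b ∈ SQP n :=
  Submonoid.subset_closure h

lemma sigma_mem_SQP {k : ℕ} (h1 : 1 ≤ k) (h2 : k + 1 ≤ n) : sigma n k ∈ SQP n := by
  rw [← band_adj]
  exact mem_SQP_of_bands (band_mem_bands h1 (by omega) h2)

lemma des_mem_SQP {a b : ℕ} (ha : 1 ≤ a) (hb : a + b ≤ n) : des n a b ∈ SQP n := by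
  induction b with
  | zero => simpa using one_mem _
  | succ b ih =>
      rw [des_succ]
      exact mul_mem (sigma_mem_SQP (by omega) (by omega)) (ih (by omega))

lemma bdelta_mem_SQP : bdelta n ∈ SQP n := by
  rcases Nat.eq_zero_or_pos n with h | h
  · rw [bdelta_def, h]
    simpa using one_mem _
  · exact bdelta_def ▸ des_mem_SQP le_rfl (by omega)

lemma SQP_word {x : BraidGroup n} (hx : x ∈ SQP n) :
    ∃ W, Represents n W x ∧ ∀ l ∈ W, l.2.2 = true := by
  induction hx using Submonoid.closure_induction with
  | mem b hb =>
      obtain ⟨i, j, h1, h2, h3, rfl⟩ := hb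
      refine ⟨[(i, j, true)], ⟨?_, by simp [evalLetter_pos]⟩, by simp⟩
      intro l hl
      simp only [List.mem_singleton] at hl
      subst hl
      exact ⟨h1, h2, h3⟩
  | one => exact ⟨[], ⟨fun l hl => by simp at hl, rfl⟩, fun l hl => by simp at hl⟩
  | mul x y hx hy ihx ihy =>
      obtain ⟨W1, ⟨hw1, he1⟩, hp1⟩ := ihx
      obtain ⟨W2, ⟨hw2, he2⟩, hp2⟩ := ihy
      refine ⟨W1 ++ W2, ⟨isWord_append hw1 hw2, ?_⟩, ?_⟩
      · rw [eval_append, he1, he2]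
      · intro l hl
        rcases List.mem_append.1 hl with h | h
        exacts [hp1 l h, hp2 l h]

lemma word_SQP {W : List (ℕ × ℕ × Bool)} (hw : IsWord n W) (hp : ∀ l ∈ W, l.2.2 = true) :
    (W.map (evalLetter n)).prod ∈ SQP n := by
  induction W with
  | nil => exact one_mem _
  | cons l W ih =>
      rw [List.map_cons, List.prod_cons]
      refine mul_mem ?_ (ih (fun x hx => hw x (List.mem_cons_of_mem l hx))
        (fun x hx => hp x (List.mem_cons_of_mem l hx)))
      obtain ⟨h1, h2, h3⟩ := hw l List.mem_cons_self
      have hpl := hp l List.mem_cons_self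
      obtain ⟨i, j, e⟩ := l
      simp only at hpl
      subst hpl
      exact mem_SQP_of_bands (band_mem_bands h1 h2 h3)

lemma tau_SQP (hn : 2 ≤ n) {x : BraidGroup n} (hx : x ∈ SQP n) :
    (bdelta n)⁻¹ * x * bdelta n ∈ SQP n := by
  induction hx using Submonoid.closure_induction with
  | mem b hb => exact mem_SQP_of_bands (tau_band_mem hn hb)
  | one => simpa using one_mem _
  | mul x y hx hy ihx ihy =>
      have : (bdelta n)⁻¹ * (x * y) * bdelta n
          = ((bdelta n)⁻¹ * x * bdelta n) * ((bdelta n)⁻¹ * y * bdelta n) := by group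
      rw [this]
      exact mul_mem ihx ihy

lemma tauInv_SQP (hn : 2 ≤ n) {x : BraidGroup n} (hx : x ∈ SQP n) :
    bdelta n * x * (bdelta n)⁻¹ ∈ SQP n := by
  induction hx using Submonoid.closure_induction with
  | mem b hb => exact mem_SQP_of_bands (tauInv_band_mem hn hb)
  | one => simpa using one_mem _
  | mul x y hx hy ihx ihy =>
      have : bdelta n * (x * y) * (bdelta n)⁻¹
          = (bdelta n * x * (bdelta n)⁻¹) * (bdelta n * y * (bdelta n)⁻¹) := by group
      rw [this]
      exact mul_mem ihx ihy

lemma conj_zpow_SQP (hn2 : 2 ≤ n) (k : ℤ) :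
    ∀ x ∈ SQP n, bdelta n ^ k * x * (bdelta n) ^ (-k) ∈ SQP n := by
  induction k using Int.induction_on with
  | zero => intro x hx; simpa using hx
  | succ k ih =>
      intro x hx
      have e : bdelta n ^ ((k:ℤ)+1) * x * bdelta n ^ (-((k:ℤ)+1))
          = bdelta n ^ (k:ℤ) * (bdelta n * x * (bdelta n)⁻¹) * bdelta n ^ (-(k:ℤ)) := by
        group
      rw [e]
      exact ih _ (tauInv_SQP hn2 hx)
  | pred k ih =>
      intro x hx
      have e : bdelta n ^ (-(k:ℤ)-1) * x * bdelta n ^ (-(-(k:ℤ)-1))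
          = bdelta n ^ (-(k:ℤ)) * ((bdelta n)⁻¹ * x * bdelta n) * bdelta n ^ (-(-(k:ℤ))) := by
        group
      rw [e]
      exact ih _ (tau_SQP hn2 hx)

lemma writhe_mul (x y : BraidGroup n) : writhe n (x * y) = writhe n x + writhe n y := by
  simp [writhe, map_mul]

lemma writhe_inv (x : BraidGroup n) : writhe n x⁻¹ = - writhe n x := by
  simp [writhe, map_inv]

@[simp] lemma writhe_one : writhe n 1 = 0 := by simp [writhe]

lemma writhe_sigma {k : ℕ} (h1 : 1 ≤ k) (h2 : k ≤ n - 1) : writhe n (sigma n k) = 1 := by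
  rw [sigma_eq_of h1 h2, writhe, writheHom, PresentedGroup.toGroup.of]
  rfl

lemma writhe_des {a b : ℕ} (ha : 1 ≤ a) (hb : a + b ≤ n) : writhe n (des n a b) = b := by
  induction b with
  | zero => simp
  | succ b ih =>
      rw [des_succ, writhe_mul, writhe_sigma (by omega) (by omega), ih (by omega)]
      push_cast
      ring

lemma writhe_bdelta (hn : 1 ≤ n) : writhe n (bdelta n) = (n:ℤ) - 1 := by
  rw [bdelta_def, writhe_des le_rfl (by omega)]
  omega

lemma writhe_band {i j : ℕ} (h1 : 1 ≤ i) (h2 : i < j) (h3 : j ≤ n) :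
    writhe n (band n i j) = 1 := by
  rw [band_def, writhe_mul, writhe_mul, writhe_inv,
    writhe_des (by omega) (by omega), writhe_sigma h1 (by omega)]
  ring

lemma writhe_SQP_nonneg {x : BraidGroup n} (hx : x ∈ SQP n) : 0 ≤ writhe n x := by
  induction hx using Submonoid.closure_induction with
  | mem b hb =>
      obtain ⟨i, j, h1, h2, h3, rfl⟩ := hb
      rw [writhe_band h1 h2 h3]
      norm_num
  | one => simp
  | mul x y hx hy ihx ihy =>
      rw [writhe_mul]
      omega

lemma writhe_zpow_delta (hn : 1 ≤ n) (k : ℤ) :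
    writhe n (bdelta n ^ k) = k * ((n:ℤ) - 1) := by
  have : writheHom n (bdelta n ^ k) = (writheHom n (bdelta n)) ^ k := map_zpow _ _ _
  rw [writhe, this]
  rw [← writhe_bdelta hn]
  simp [writhe]

lemma writhe_word {W : List (ℕ × ℕ × Bool)} (hw : IsWord n W) :
    writhe n ((W.map (evalLetter n)).prod)
      = ((W.filter (fun l => l.2.2)).length : ℤ) - (nbWord W : ℤ) := by
  induction W with
  | nil => simp [nbWord]
  | cons l W ih =>
      have hl := hw l List.mem_cons_self
      have hw' : IsWord n W := fun x hx => hw x (List.mem_cons_of_mem l hx)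
      obtain ⟨i, j, e⟩ := l
      obtain ⟨h1, h2, h3⟩ := hl
      rw [List.map_cons, List.prod_cons, writhe_mul, ih hw']
      cases e with
      | true =>
          rw [evalLetter_pos, writhe_band h1 h2 h3]
          simp [nbWord, List.filter]
          omega
      | false =>
          rw [evalLetter_neg, writhe_inv, writhe_band h1 h2 h3]
          simp [nbWord, List.filter]
          omega

lemma writhe_posword {W : List (ℕ × ℕ × Bool)} (hw : IsWord n W)
    (hp : ∀ l ∈ W, l.2.2 = true) :
    writhe n ((W.map (evalLetter n)).prod) = W.length := by
  rw [writhe_word hw, nbWord]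
  rw [List.length_filter_eq_length_iff.2 hp]
  have : (W.filter (fun l => !l.2.2)) = [] := by
    rw [List.filter_eq_nil_iff]
    intro l hl
    simp [hp l hl]
  rw [this]
  simp

end Braid

namespace Braid
variable {n : ℕ}

lemma bble_intro {V P Q : BraidGroup n} (hP : P ∈ SQP n) (hQ : Q ∈ SQP n) :
    bble n V (P * V * Q) := ⟨P, hP, Q, hQ, rfl⟩

lemma bble_writhe {V W : BraidGroup n} (h : bble n V W) : writhe n V ≤ writhe n W := by
  obtain ⟨P, hP, Q, hQ, rfl⟩ := h
  rw [writhe_mul, writhe_mul]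
  have h1 := writhe_SQP_nonneg hP
  have h2 := writhe_SQP_nonneg hQ
  omega

lemma delta_zpow_mem_SQP {k : ℤ} (hk : 0 ≤ k) : bdelta n ^ k ∈ SQP n := by
  lift k to ℕ using hk
  rw [zpow_natCast]
  exact pow_mem bdelta_mem_SQP _

lemma inv_SQP_rep (hn2 : 2 ≤ n) {P : BraidGroup n} (hP : P ∈ SQP n) :
    ∃ t : ℕ, ∃ R ∈ SQP n, P⁻¹ = bdelta n ^ (-(t:ℤ)) * R := by
  induction hP using Submonoid.closure_induction with
  | mem b hb =>
      obtain ⟨i, j, h1, h2, h3, rfl⟩ := hb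
      obtain ⟨Z, hw, hp, _, he⟩ := right_div hn2 h1 h2 h3
      refine ⟨1, (Z.map (evalLetter n)).prod, word_SQP hw hp, ?_⟩
      rw [← he]
      group
  | one => exact ⟨0, 1, one_mem _, by simp⟩
  | mul x y hx hy ihx ihy =>
      obtain ⟨s, R', hR', he'⟩ := ihx
      obtain ⟨t, R, hR, he⟩ := ihy
      refine ⟨t + s, (bdelta n ^ (s:ℤ) * R * bdelta n ^ (-(s:ℤ))) * R',
        mul_mem (conj_zpow_SQP hn2 _ R hR) hR', ?_⟩
      have : (x * y)⁻¹ = y⁻¹ * x⁻¹ := by group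
      rw [this, he, he']
      have hc : (-(↑(t + s) : ℤ)) = -(t:ℤ) + -(s:ℤ) := by push_cast; ring
      rw [hc]
      group

lemma frac (hn2 : 2 ≤ n) (x : BraidGroup n) :
    ∃ m : ℕ, ∃ P ∈ SQP n, x = bdelta n ^ (-(m:ℤ)) * P := by
  let S : Subgroup (BraidGroup n) := {
    carrier := {x | ∃ m : ℕ, ∃ P ∈ SQP n, x = bdelta n ^ (-(m:ℤ)) * P}
    one_mem' := ⟨0, 1, one_mem _, by simp⟩
    mul_mem' := by
      rintro a b ⟨m, P, hP, rfl⟩ ⟨k, Q, hQ, rfl⟩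
      refine ⟨m + k, (bdelta n ^ (k:ℤ) * P * bdelta n ^ (-(k:ℤ))) * Q,
        mul_mem (conj_zpow_SQP hn2 _ P hP) hQ, ?_⟩
      have hc : (-(↑(m + k) : ℤ)) = -(m:ℤ) + -(k:ℤ) := by push_cast; ring
      rw [hc]
      group
    inv_mem' := by
      rintro a ⟨m, P, hP, rfl⟩
      obtain ⟨t, R, hR, he⟩ := inv_SQP_rep hn2 hP
      have hconj : bdelta n ^ (-(m:ℤ)) * R * bdelta n ^ ((m:ℤ)) ∈ SQP n := by
        have := conj_zpow_SQP hn2 (-(m:ℤ)) R hR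
        rwa [neg_neg] at this
      have key : (bdelta n ^ (-(m:ℤ)) * P)⁻¹
          = bdelta n ^ ((m:ℤ) - (t:ℤ)) * (bdelta n ^ (-(m:ℤ)) * R * bdelta n ^ ((m:ℤ))) := by
        have h1 : (bdelta n ^ (-(m:ℤ)) * P)⁻¹ = P⁻¹ * bdelta n ^ ((m:ℤ)) := by group
        rw [h1, he]
        group
      rcases le_or_gt t m with h | h
      · refine ⟨0, bdelta n ^ ((m:ℤ) - t) * (bdelta n ^ (-(m:ℤ)) * R * bdelta n ^ ((m:ℤ))),
          mul_mem (delta_zpow_mem_SQP (by omega)) hconj, ?_⟩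
        rw [key]
        simp [mul_assoc]
      · refine ⟨t - m, bdelta n ^ (-(m:ℤ)) * R * bdelta n ^ ((m:ℤ)), hconj, ?_⟩
        rw [key, show (-(↑(t - m):ℤ)) = (m:ℤ) - (t:ℤ) from by omega]
  }
  have hle : Subgroup.closure (Set.range (PresentedGroup.of : Fin (n-1) → BraidGroup n)) ≤ S := by
    rw [Subgroup.closure_le]
    rintro _ ⟨i, rfl⟩
    have hlt : (i:ℕ) < n - 1 := i.isLt
    have hi : sigma n ((i:ℕ)+1) = PresentedGroup.of i := by
      rw [sigma_eq_of (by omega) (by omega)]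
      exact congrArg _ (Fin.ext (by simp))
    exact ⟨0, PresentedGroup.of i, by
      rw [← hi]; exact sigma_mem_SQP (by omega) (by omega), by simp⟩
  rw [PresentedGroup.closure_range_of] at hle
  exact hle (Subgroup.mem_top x)

end Braid

namespace Braid
variable {n : ℕ}

lemma posword_div_delta_pow (hn2 : 2 ≤ n) (W : List (ℕ×ℕ×Bool)) (hw : IsWord n W)
    (hp : ∀ l ∈ W, l.2.2 = true) :
    ∃ S ∈ SQP n, bdelta n ^ W.length = (W.map (evalLetter n)).prod * S := by
  induction W using List.reverseRecOn with
  | nil => exact ⟨1, one_mem _, by simp⟩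
  | append_singleton W l ih =>
      obtain ⟨S', hS', he'⟩ := ih (fun x hx => hw x (by simp [hx]))
        (fun x hx => hp x (by simp [hx]))
      obtain ⟨h1, h2, h3⟩ := hw l (by simp)
      have hpl : l.2.2 = true := hp l (by simp)
      obtain ⟨i, j, e⟩ := l
      simp only at hpl
      subst hpl
      obtain ⟨Z, hwZ, hpZ, _, heZ⟩ := left_div h1 h2 h3
      have hδ : bdelta n = band n i j * (Z.map (evalLetter n)).prod := by
        rw [← heZ]; group
      refine ⟨(Z.map (evalLetter n)).prod * ((bdelta n)⁻¹ * S' * bdelta n),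
        mul_mem (word_SQP hwZ hpZ) (tau_SQP hn2 hS'), ?_⟩
      simp only [List.length_append, List.length_singleton]
      rw [pow_succ, he', eval_append, List.map_singleton, List.prod_singleton,
        evalLetter_pos, hδ]
      group

lemma SQP_div_delta_pow (hn2 : 2 ≤ n) {x : BraidGroup n} (hx : x ∈ SQP n) :
    ∃ m : ℕ, ((m:ℤ) = writhe n x) ∧ ∃ S ∈ SQP n, bdelta n ^ m = x * S := by
  obtain ⟨W, ⟨hw, he⟩, hp⟩ := SQP_word hx
  obtain ⟨S, hS, hd⟩ := posword_div_delta_pow hn2 W hw hp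
  exact ⟨W.length, by rw [← he, writhe_posword hw hp], S, hS, by rw [← he]; exact hd⟩

lemma Sinf_nonempty (hn2 : 2 ≤ n) (β : BraidGroup n) :
    Set.Nonempty {r : ℤ | bble n (bdelta n ^ r) β} := by
  obtain ⟨m, P, hP, he⟩ := frac hn2 β
  exact ⟨-(m:ℤ), 1, one_mem _, P, hP, by rw [he]; group⟩

lemma writhe_of_inf_mem (hn1 : 1 ≤ n) {r : ℤ} {β : BraidGroup n}
    (h : bble n (bdelta n ^ r) β) : r * ((n:ℤ)-1) ≤ writhe n β := by
  have := bble_writhe h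
  rwa [writhe_zpow_delta hn1] at this

lemma writhe_of_sup_mem (hn1 : 1 ≤ n) {s : ℤ} {β : BraidGroup n}
    (h : bble n β (bdelta n ^ s)) : writhe n β ≤ s * ((n:ℤ)-1) := by
  have := bble_writhe h
  rwa [writhe_zpow_delta hn1] at this

lemma Sinf_bddAbove (hn2 : 2 ≤ n) (β : BraidGroup n) :
    BddAbove {r : ℤ | bble n (bdelta n ^ r) β} := by
  refine ⟨|writhe n β|, fun r hr => ?_⟩
  by_contra hc
  push_neg at hc
  have h0 : (0:ℤ) ≤ r := le_trans (abs_nonneg _) hc.le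
  have h1 : r * 1 ≤ r * ((n:ℤ)-1) := by
    apply mul_le_mul_of_nonneg_left _ h0
    omega
  have h2 := writhe_of_inf_mem (by omega) hr
  have h3 := le_abs_self (writhe n β)
  linarith

lemma Ssup_nonempty (hn2 : 2 ≤ n) (β : BraidGroup n) :
    Set.Nonempty {s : ℤ | bble n β (bdelta n ^ s)} := by
  obtain ⟨m, P, hP, he⟩ := frac hn2 β
  obtain ⟨mp, _, S, hS, hd⟩ := SQP_div_delta_pow hn2 hP
  refine ⟨-(m:ℤ) + (mp:ℤ), 1, one_mem _, S, hS, ?_⟩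
  rw [zpow_add, zpow_natCast, hd, he]
  group

lemma Ssup_bddBelow (hn2 : 2 ≤ n) (β : BraidGroup n) :
    BddBelow {s : ℤ | bble n β (bdelta n ^ s)} := by
  refine ⟨-|writhe n β|, fun s hs => ?_⟩
  by_contra hc
  push_neg at hc
  have h0 : s ≤ 0 := by
    have := abs_nonneg (writhe n β)
    omega
  have h1 : s * ((n:ℤ)-1) ≤ s * 1 := by
    apply mul_le_mul_of_nonpos_left _ h0
    omega
  have h2 := writhe_of_sup_mem (by omega) hs
  have h3 := neg_abs_le (writhe n β)
  linarith

lemma binf_mem (hn2 : 2 ≤ n) (β : BraidGroup n) :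
    bble n (bdelta n ^ (binf n β)) β :=
  Int.csSup_mem (Sinf_nonempty hn2 β) (Sinf_bddAbove hn2 β)

lemma bsup_mem (hn2 : 2 ≤ n) (β : BraidGroup n) :
    bble n β (bdelta n ^ (bsup n β)) :=
  Int.csInf_mem (Ssup_nonempty hn2 β) (Ssup_bddBelow hn2 β)

lemma bsup_le (hn2 : 2 ≤ n) {β : BraidGroup n} {s : ℤ} (h : bble n β (bdelta n ^ s)) :
    bsup n β ≤ s :=
  csInf_le (Ssup_bddBelow hn2 β) h

/-- flip a word into the word of its inverse -/
def winv (W : List (ℕ×ℕ×Bool)) : List (ℕ×ℕ×Bool) :=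
  W.reverse.map (fun l => (l.1, l.2.1, !l.2.2))

lemma winv_cons {l : ℕ×ℕ×Bool} {W : List (ℕ×ℕ×Bool)} :
    winv (l :: W) = winv W ++ [(l.1, l.2.1, !l.2.2)] := by
  simp [winv]

lemma winv_isWord {W : List (ℕ×ℕ×Bool)} (hw : IsWord n W) : IsWord n (winv W) := by
  intro l hl
  simp only [winv, List.mem_map, List.mem_reverse] at hl
  obtain ⟨x, hx, rfl⟩ := hl
  exact hw x hx

lemma evalLetter_flip (l : ℕ×ℕ×Bool) :
    evalLetter n (l.1, l.2.1, !l.2.2) = (evalLetter n l)⁻¹ := by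
  obtain ⟨i, j, e⟩ := l
  cases e <;> simp [evalLetter]

lemma winv_eval {W : List (ℕ×ℕ×Bool)} :
    ((winv W).map (evalLetter n)).prod = ((W.map (evalLetter n)).prod)⁻¹ := by
  induction W with
  | nil => simp [winv]
  | cons l W ih =>
      rw [winv_cons, eval_append, ih, List.map_cons, List.prod_cons]
      simp [evalLetter_flip, mul_inv_rev]

lemma delta_neg_word (hn2 : 2 ≤ n) (m : ℕ) :
    ∃ W, IsWord n W ∧ (W.map (evalLetter n)).prod = bdelta n ^ (-(m:ℤ)) ∧
      (∀ l ∈ W, l.2.2 = false) := by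
  induction m with
  | zero => exact ⟨[], fun l hl => by simp at hl, by simp, fun l hl => by simp at hl⟩
  | succ m ih =>
      obtain ⟨W, hw, he, hneg⟩ := ih
      refine ⟨winv (sword 1 (n-1)) ++ W,
        isWord_append (winv_isWord (sword_isWord le_rfl (by omega))) hw, ?_, ?_⟩
      · rw [eval_append, winv_eval, sword_eval, ← bdelta_def, he,
          show (-(↑(m+1):ℤ)) = -1 + -(m:ℤ) from by push_cast; ring, zpow_add]
        group
      · intro l hl
        rcases List.mem_append.1 hl with h | h
        · simp only [winv, List.mem_map, List.mem_reverse] at h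
          obtain ⟨x, hx, rfl⟩ := h
          have := sword_pos x hx
          simp [this]
        · exact hneg l h

lemma represents_exists (hn2 : 2 ≤ n) (β : BraidGroup n) : ∃ W, Represents n W β := by
  obtain ⟨m, P, hP, he⟩ := frac hn2 β
  obtain ⟨WP, ⟨hwP, heP⟩, _⟩ := SQP_word hP
  obtain ⟨Wm, hwm, hem, _⟩ := delta_neg_word hn2 m
  exact ⟨Wm ++ WP, isWord_append hwm hwP, by rw [eval_append, hem, heP, he]⟩

lemma nb_le_of_repr {β : BraidGroup n} {W : List (ℕ×ℕ×Bool)} (h : Represents n W β) :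
    nb n β ≤ nbWord W :=
  Nat.sInf_le ⟨W, h, rfl⟩

lemma nb_spec (hn2 : 2 ≤ n) (β : BraidGroup n) :
    ∃ W, Represents n W β ∧ nbWord W = nb n β := by
  obtain ⟨W, hW⟩ := represents_exists hn2 β
  have hne : {m : ℕ | ∃ W, Represents n W β ∧ nbWord W = m}.Nonempty := ⟨nbWord W, W, hW, rfl⟩
  exact Nat.sInf_mem hne

lemma neg_writhe_le_nb (hn2 : 2 ≤ n) (β : BraidGroup n) :
    -(writhe n β) ≤ (nb n β : ℤ) := by
  obtain ⟨W, ⟨hw, he⟩, hnb⟩ := nb_spec hn2 β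
  have := writhe_word hw
  rw [he, hnb] at this
  have hpos : (0:ℤ) ≤ ((W.filter (fun l => l.2.2)).length : ℤ) := by positivity
  omega

end Braid

namespace Braid
variable {n : ℕ}

lemma conj_zpow_bands (hn2 : 2 ≤ n) (k : ℤ) :
    ∀ x ∈ Bands n, bdelta n ^ k * x * (bdelta n) ^ (-k) ∈ Bands n := by
  induction k using Int.induction_on with
  | zero => intro x hx; simpa using hx
  | succ k ih =>
      intro x hx
      have e : bdelta n ^ ((k:ℤ)+1) * x * bdelta n ^ (-((k:ℤ)+1))
          = bdelta n ^ (k:ℤ) * (bdelta n * x * (bdelta n)⁻¹) * bdelta n ^ (-(k:ℤ)) := by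
        group
      rw [e]
      exact ih _ (tauInv_band_mem hn2 hx)
  | pred k ih =>
      intro x hx
      have e : bdelta n ^ (-(k:ℤ)-1) * x * bdelta n ^ (-(-(k:ℤ)-1))
          = bdelta n ^ (-(k:ℤ)) * ((bdelta n)⁻¹ * x * bdelta n) * bdelta n ^ (-(-(k:ℤ))) := by
        group
      rw [e]
      exact ih _ (tau_band_mem hn2 hx)

lemma conj_word (hn2 : 2 ≤ n) (k : ℤ) (Z : List (ℕ×ℕ×Bool)) (hw : IsWord n Z)
    (hp : ∀ l ∈ Z, l.2.2 = true) :
    ∃ Z', IsWord n Z' ∧ (∀ l ∈ Z', l.2.2 = true) ∧ Z'.length = Z.length ∧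
      (Z'.map (evalLetter n)).prod
        = bdelta n ^ k * (Z.map (evalLetter n)).prod * bdelta n ^ (-k) := by
  induction Z with
  | nil => exact ⟨[], fun l hl => by simp at hl, fun l hl => by simp at hl, rfl, by
      simp only [List.map_nil, List.prod_nil]; group⟩
  | cons l Z ih =>
      obtain ⟨Z', hw', hp', hl', he'⟩ := ih (fun x hx => hw x (List.mem_cons_of_mem l hx))
        (fun x hx => hp x (List.mem_cons_of_mem l hx))
      obtain ⟨h1, h2, h3⟩ := hw l List.mem_cons_self
      have hpl := hp l List.mem_cons_self
      obtain ⟨i, j, e⟩ := l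
      simp only at hpl
      subst hpl
      obtain ⟨i', j', g1, g2, g3, hg⟩ :=
        conj_zpow_bands hn2 k _ (band_mem_bands h1 h2 h3)
      refine ⟨(i', j', true) :: Z', ?_, ?_, by simp [hl'], ?_⟩
      · intro x hx
        rcases List.mem_cons.1 hx with h | h
        · subst h; exact ⟨g1, g2, g3⟩
        · exact hw' x h
      · intro x hx
        rcases List.mem_cons.1 hx with h | h
        · subst h; rfl
        · exact hp' x h
      · rw [List.map_cons, List.prod_cons, List.map_cons, List.prod_cons, he',
          evalLetter_pos, ← hg, evalLetter_pos]
        group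

lemma nbWord_append (W1 W2 : List (ℕ×ℕ×Bool)) :
    nbWord (W1 ++ W2) = nbWord W1 + nbWord W2 := by
  simp [nbWord, List.filter_append]

lemma nbWord_pos {W : List (ℕ×ℕ×Bool)} (hp : ∀ l ∈ W, l.2.2 = true) : nbWord W = 0 := by
  rw [nbWord]
  have : W.filter (fun l => !l.2.2) = [] := by
    rw [List.filter_eq_nil_iff]
    intro l hl
    simp [hp l hl]
  rw [this]
  rfl

lemma nbWord_neg {W : List (ℕ×ℕ×Bool)} (hp : ∀ l ∈ W, l.2.2 = false) :
    nbWord W = W.length := by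
  rw [nbWord]
  rw [List.length_filter_eq_length_iff.2 (fun l hl => by simp [hp l hl])]

@[simp] lemma winv_length {W : List (ℕ×ℕ×Bool)} : (winv W).length = W.length := by
  simp [winv]

lemma winv_neg_of_pos {W : List (ℕ×ℕ×Bool)} (hp : ∀ l ∈ W, l.2.2 = true) :
    ∀ l ∈ winv W, l.2.2 = false := by
  intro l hl
  simp only [winv, List.mem_map, List.mem_reverse] at hl
  obtain ⟨x, hx, rfl⟩ := hl
  simp [hp x hx]

lemma winv_pos_of_neg {W : List (ℕ×ℕ×Bool)} (hp : ∀ l ∈ W, l.2.2 = false) :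
    ∀ l ∈ winv W, l.2.2 = true := by
  intro l hl
  simp only [winv, List.mem_map, List.mem_reverse] at hl
  obtain ⟨x, hx, rfl⟩ := hl
  simp [hp x hx]

lemma phi (hn3 : 3 ≤ n) : ∀ (r : ℕ) (P N : List (ℕ×ℕ×Bool)) (β : BraidGroup n),
    IsWord n P → (∀ l ∈ P, l.2.2 = true) →
    IsWord n N → (∀ l ∈ N, l.2.2 = false) →
    β = (P.map (evalLetter n)).prod * bdelta n ^ (-(r:ℤ)) * (N.map (evalLetter n)).prod →
    0 < bsup n β → nb n β ≤ (n-2) * r + N.length := by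
  intro r
  induction r with
  | zero =>
      intro P N β hwP hpP hwN hnN he hs
      have hrep : Represents n (P ++ N) β := by
        refine ⟨isWord_append hwP hwN, ?_⟩
        rw [eval_append, he]
        simp
      calc nb n β ≤ nbWord (P ++ N) := nb_le_of_repr hrep
        _ = N.length := by rw [nbWord_append, nbWord_pos hpP, nbWord_neg hnN]; omega
        _ ≤ (n-2) * 0 + N.length := by omega
  | succ r ih =>
      intro P N β hwP hpP hwN hnN he hs
      rcases List.eq_nil_or_concat P with rfl | ⟨P', l, rfl⟩
      · exfalso
        have hMw := word_SQP (winv_isWord hwN) (winv_pos_of_neg (W := N) (by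
          intro l hl; exact hnN l hl))
        have hble : bble n β (bdelta n ^ (-(↑(r+1):ℤ))) := by
          refine ⟨1, one_mem _, ((winv N).map (evalLetter n)).prod, hMw, ?_⟩
          rw [winv_eval, he]
          simp only [List.map_nil, List.prod_nil, one_mul]
          group
        have hle := bsup_le (by omega) hble
        omega
      · rw [List.concat_eq_append] at hwP hpP he
        obtain ⟨h1, h2, h3⟩ := hwP l (by simp)
        have hpl := hpP l (by simp)
        obtain ⟨i, j, e⟩ := l
        simp only at hpl
        subst hpl
        obtain ⟨Z, hwZ, hpZ, hlZ, heZ⟩ := right_div (by omega) h1 h2 h3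
        obtain ⟨Z', hwZ', hpZ', hlZ', heZ'⟩ := conj_word (by omega) (r:ℤ) Z hwZ hpZ
        have hkey : band n i j * bdelta n ^ (-(↑(r+1):ℤ))
            = bdelta n ^ (-(r:ℤ)) * ((Z'.map (evalLetter n)).prod)⁻¹ := by
          rw [heZ', show (-(↑(r+1):ℤ)) = -1 + -(r:ℤ) from by push_cast; ring, zpow_add,
            ← heZ]
          group
        have he' : β = (P'.map (evalLetter n)).prod * bdelta n ^ (-(r:ℤ)) *
            ((winv Z' ++ N).map (evalLetter n)).prod := by
          rw [eval_append, winv_eval, he, eval_append]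
          simp only [List.map_singleton, List.prod_singleton, evalLetter_pos]
          calc (P'.map (evalLetter n)).prod * band n i j * bdelta n ^ (-(↑(r+1):ℤ)) *
                (N.map (evalLetter n)).prod
              = (P'.map (evalLetter n)).prod * (band n i j * bdelta n ^ (-(↑(r+1):ℤ))) *
                (N.map (evalLetter n)).prod := by group
            _ = _ := by rw [hkey]; group
        have hcount := ih P' (winv Z' ++ N) β
          (fun x hx => hwP x (by simp [hx]))
          (fun x hx => hpP x (by simp [hx]))
          (isWord_append (winv_isWord hwZ') hwN)
          (by
            intro x hx
            rcases List.mem_append.1 hx with h | h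
            · exact winv_neg_of_pos hpZ' x h
            · exact hnN x h)
          he' hs
        have hlen : (winv Z' ++ N).length = (n-2) + N.length := by
          simp [hlZ', hlZ]
        have hmul : (n-2)*(r+1) = (n-2)*r + (n-2) := by ring
        omega

end Braid

/-- upper bounds for `nb(β)` when `inf(β) ≤ -1`. -/
theorem statement_9 (n : ℕ) (hn : 3 ≤ n) (β : BraidGroup n) (h : binf n β ≤ -1) :
    (binf n β < 0 ∧ 0 < bsup n β → (nb n β : ℤ) ≤ ((n : ℤ) - 2) * |binf n β|) ∧
    (binf n β < bsup n β ∧ bsup n β ≤ 0 →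
      (nb n β : ℤ) = -writhe n β ∧
      (nb n β : ℤ) ≤ ((n : ℤ) - 2) * |binf n β| + |bsup n β|) := by
  have hn2 : 2 ≤ n := by omega
  constructor
  · rintro ⟨hi1, hi2⟩
    obtain ⟨P, hP, Q, hQ, heq⟩ := Braid.binf_mem hn2 β
    have hQ' := Braid.conj_zpow_SQP hn2 (binf n β) Q hQ
    have hβ : β = (P * (bdelta n ^ (binf n β) * Q * bdelta n ^ (-(binf n β)))) *
        bdelta n ^ (binf n β) := by
      conv_lhs => rw [heq]
      group
    obtain ⟨W, ⟨hwW, heW⟩, hpW⟩ := Braid.SQP_word (mul_mem hP hQ')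
    set r : ℕ := (-(binf n β)).toNat with hrdef
    have hr : -(r:ℤ) = binf n β := by
      rw [hrdef, Int.toNat_of_nonneg (by omega)]
      ring
    have hphi := Braid.phi hn r W [] β hwW hpW
      (fun l hl => by simp at hl) (fun l hl => by simp at hl)
      (by
        rw [hr]
        simp only [List.map_nil, List.prod_nil, mul_one]
        rw [heW, ← hβ])
      hi2
    have habs : |binf n β| = (r:ℤ) := by
      rw [abs_of_neg hi1]; omega
    have hcast : ((n-2 : ℕ) : ℤ) = (n:ℤ) - 2 := by omega
    calc (nb n β : ℤ) ≤ (((n-2) * r + ([] : List (ℕ×ℕ×Bool)).length : ℕ) : ℤ) := by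
          exact_mod_cast hphi
      _ = ((n:ℤ) - 2) * |binf n β| := by
          simp only [List.length_nil, Nat.add_zero]
          push_cast
          rw [habs, hcast]
  · rintro ⟨hs1, hs2⟩
    obtain ⟨P, hP, Q, hQ, heq⟩ := Braid.bsup_mem hn2 β
    have h0 : bble n β (bdelta n ^ (0:ℤ)) := by
      refine ⟨bdelta n ^ (-(bsup n β)) * P,
        mul_mem (Braid.delta_zpow_mem_SQP (by omega)) hP, Q, hQ, ?_⟩
      rw [show (0:ℤ) = -(bsup n β) + bsup n β from by ring, zpow_add, heq]
      group
    obtain ⟨P0, hP0, Q0, hQ0, heq0⟩ := h0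
    have h1 : (1 : BraidGroup n) = P0 * β * Q0 := by
      rw [← heq0]
      exact (zpow_zero _).symm
    have hβeq : β = P0⁻¹ * Q0⁻¹ := by
      calc β = P0⁻¹ * (P0 * β * Q0) * Q0⁻¹ := by group
        _ = P0⁻¹ * 1 * Q0⁻¹ := by rw [← h1]
        _ = P0⁻¹ * Q0⁻¹ := by group
    have hβinv : β⁻¹ = Q0 * P0 := by rw [hβeq]; group
    have hβinvSQP : β⁻¹ ∈ SQP n := hβinv ▸ mul_mem hQ0 hP0
    obtain ⟨M, ⟨hwM, heM⟩, hpM⟩ := Braid.SQP_word hβinvSQP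
    have hrep : Represents n (Braid.winv M) β :=
      ⟨Braid.winv_isWord hwM, by rw [Braid.winv_eval, heM]; group⟩
    have hnb_le : nb n β ≤ M.length := by
      have := Braid.nb_le_of_repr hrep
      rwa [Braid.nbWord_neg (Braid.winv_neg_of_pos hpM), Braid.winv_length] at this
    have hwβ : writhe n β = -(M.length : ℤ) := by
      have := Braid.writhe_posword hwM hpM
      rw [heM, Braid.writhe_inv] at this
      omega
    have hge := Braid.neg_writhe_le_nb hn2 β
    have heqnb : (nb n β : ℤ) = - writhe n β := by omega
    refine ⟨heqnb, ?_⟩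
    obtain ⟨P1, hP1, Q1, hQ1, heq1⟩ := Braid.binf_mem hn2 β
    have hγ : bdelta n ^ (-(binf n β)) * β ∈ SQP n := by
      have hc := Braid.conj_zpow_SQP hn2 (-(binf n β)) P1 hP1
      rw [neg_neg] at hc
      have he2 : bdelta n ^ (-(binf n β)) * β
          = (bdelta n ^ (-(binf n β)) * P1 * bdelta n ^ (binf n β)) * Q1 := by
        nth_rewrite 2 [heq1]
        group
      rw [he2]
      exact mul_mem hc hQ1
    obtain ⟨m, hm, S, hS, hd⟩ := Braid.SQP_div_delta_pow hn2 hγ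
    have hsup_le : bsup n β ≤ binf n β + m := by
      apply Braid.bsup_le hn2
      refine ⟨1, one_mem _, S, hS, ?_⟩
      rw [zpow_add, zpow_natCast, hd]
      group
    have hwγ : writhe n (bdelta n ^ (-(binf n β)) * β)
        = -(binf n β) * ((n:ℤ)-1) + writhe n β := by
      rw [Braid.writhe_mul, Braid.writhe_zpow_delta (by omega)]
    rw [heqnb, abs_of_neg (show binf n β < 0 from by omega), abs_of_nonpos hs2]
    have e1 : writhe n β = (m:ℤ) + binf n β * ((n:ℤ)-1) := by
      rw [← hm] at hwγ
      linarith [hwγ]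
    have e2 : (m:ℤ) ≥ bsup n β - binf n β := by omega
    linarith [e1, e2]
end
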